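/- arXiv:2010.11552 — 4 statements merged into one kernel-verified Lean document; each statement's English description precedes it below -/
import Mathlib

section
/- (Corollary 4, samplewise interpolating average bound) In the random-subset setting, assume L_{Z(S)}(W) = 0 almost surely under P_{WZ̃S}. Then the average population loss satisfies E_{P_{WZ̃S}}[L_{P_Z}(W)] ≤ Σᵢ₌₁ⁿ I(W; Sᵢ | Z̃)/(n·log 2), where I(W; Sᵢ | Z̃) is the conditional mutual information between W and Sᵢ given Z̃. -/
open MeasureTheory ProbabilityTheory Real
open scoped ENNReal NNReal

noncomputable section

/-- Fair coin (`Bernoulli(1/2)`) distribution on `Bool`. -/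
def coin : Measure Bool := (PMF.uniformOfFintype Bool).toMeasure

instance : IsProbabilityMeasure coin := PMF.toMeasure.isProbabilityMeasure _

/-- Relative entropy (KL divergence) `∫ log (dμ/dν) dμ`. -/
def klDiv' {α : Type*} [MeasurableSpace α] (μ ν : Measure α) : ℝ :=
  ∫ x, Real.log ((μ.rnDeriv ν x).toReal) ∂μ

/-- Training loss in the random-subset setting. -/
def trainLoss {Z W : Type*} (n : ℕ) (loss : W → Z → ℝ)
    (x : ((Fin n × Bool → Z) × (Fin n → Bool)) × W) : ℝ :=
  (∑ i, loss x.2 (x.1.1 (i, x.1.2 i))) / n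

/-- Test loss in the random-subset setting. -/
def testLoss {Z W : Type*} (n : ℕ) (loss : W → Z → ℝ)
    (x : ((Fin n × Bool → Z) × (Fin n → Bool)) × W) : ℝ :=
  (∑ i, loss x.2 (x.1.1 (i, !x.1.2 i))) / n

/-- Population loss. -/
def popLoss {Z W : Type*} [MeasurableSpace Z] (PZ : Measure Z)
    (loss : W → Z → ℝ) (w : W) : ℝ :=
  ∫ z, loss w z ∂PZ

lemma one_sub_inv_le_log {x : ℝ} (hx : 0 < x) : 1 - x⁻¹ ≤ Real.log x := by
  have h := Real.log_le_sub_one_of_pos (inv_pos.mpr hx)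
  rw [Real.log_inv] at h
  linarith

lemma mul_abs_log_le_two {t : ℝ} (h0 : 0 ≤ t) (h1 : t ≤ 1) :
    t * |Real.log (2 * t)| ≤ 2 := by
  rcases eq_or_lt_of_le h0 with h | h
  · simp [← h]
  · have hlog : Real.log (2 * t) = Real.log 2 + Real.log t := Real.log_mul two_ne_zero h.ne'
    have habs : |Real.log (2 * t)| ≤ Real.log 2 + (- Real.log t) := by
      rw [hlog]
      have hlt : Real.log t ≤ 0 := Real.log_nonpos h0 h1
      have h2 : (0:ℝ) ≤ Real.log 2 := Real.log_nonneg (by norm_num)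
      rw [abs_le]; constructor <;> nlinarith [abs_nonneg (Real.log t)]
    have hneg : t * (- Real.log t) ≤ 1 - t := by
      have h2 := one_sub_inv_le_log h
      nlinarith [mul_inv_cancel₀ h.ne', mul_le_mul_of_nonneg_left h2 h0]
    have hl2 : Real.log 2 ≤ 1 := by
      have := Real.log_two_lt_d9
      linarith
    nlinarith
lemma phi_nonneg {a b : ℝ} (ha : 0 ≤ a) (hb : 0 ≤ b) (hab : a + b = 1) :
    0 ≤ a * Real.log (2 * a) + b * Real.log (2 * b) := by
  rcases eq_or_lt_of_le ha with h | h
  · have hb1 : b = 1 := by linarith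
    simp [← h, hb1]
    exact Real.log_nonneg (by norm_num)
  rcases eq_or_lt_of_le hb with h' | h'
  · have ha1 : a = 1 := by linarith
    simp [← h', ha1]
    exact Real.log_nonneg (by norm_num)
  · have l1 : 1 - (2*a)⁻¹ ≤ Real.log (2*a) := one_sub_inv_le_log (by linarith)
    have l2 : 1 - (2*b)⁻¹ ≤ Real.log (2*b) := one_sub_inv_le_log (by linarith)
    have e1 : a * (1 - (2*a)⁻¹) = a - 1/2 := by field_simp
    have e2 : b * (1 - (2*b)⁻¹) = b - 1/2 := by field_simp
    nlinarith [mul_le_mul_of_nonneg_left l1 ha, mul_le_mul_of_nonneg_left l2 hb]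


lemma integrable_of_bdd {α : Type*} [MeasurableSpace α] {μ : Measure α} [IsFiniteMeasure μ]
    {f : α → ℝ} (hf : AEStronglyMeasurable f μ) (C : ℝ) (h : ∀ x, |f x| ≤ C) : Integrable f μ :=
  Integrable.mono' (integrable_const C) hf (Filter.Eventually.of_forall fun x => by
    simpa [Real.norm_eq_abs] using h x)

lemma key_pi {ι : Type*} [Fintype ι] [DecidableEq ι] {Z : Type*} [MeasurableSpace Z]
    (PZ : Measure Z) [IsProbabilityMeasure PZ] (k : ι)
    (G : (ι → Z) → Z → ℝ)
    (hGmeas : Measurable (Function.uncurry G))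
    (hGbd : ∀ p z, |G p z| ≤ 1)
    (hind : ∀ p c, G (Function.update p k c) = G p) :
    ∫ p, G p (p k) ∂(Measure.pi fun _ : ι => PZ) =
      ∫ p, ∫ z, G p z ∂PZ ∂(Measure.pi fun _ : ι => PZ) := by
  classical
  obtain ⟨pr, hpr⟩ : ∃ pr : ι → Prop, pr = fun x => x = k := ⟨_, rfl⟩
  haveI : DecidablePred pr := fun x => decidable_of_iff (x = k) (by rw [hpr])
  have hk : pr k := by rw [hpr]
  have hprk : ∀ x, pr x → x = k := fun x hx => by rw [hpr] at hx; exact hx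
  haveI huniq : Unique {x : ι // pr x} :=
    ⟨⟨⟨k, hk⟩⟩, fun x => Subtype.ext (hprk x.1 x.2)⟩
  have hdefault : (default : {x : ι // pr x}) = ⟨k, hk⟩ := Subsingleton.elim _ _
  have MP : MeasurePreserving (MeasurableEquiv.piEquivPiSubtypeProd (fun _ : ι => Z) pr)
      (Measure.pi fun _ : ι => PZ)
      ((Measure.pi fun _ : {x : ι // pr x} => PZ).prod
        (Measure.pi fun _ : {x : ι // ¬ pr x} => PZ)) :=
    measurePreserving_piEquivPiSubtypeProd (fun _ : ι => PZ) pr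
  set e := MeasurableEquiv.piEquivPiSubtypeProd (fun _ : ι => Z) pr with he
  have MPs : MeasurePreserving e.symm
      ((Measure.pi fun _ : {x : ι // pr x} => PZ).prod
        (Measure.pi fun _ : {x : ι // ¬ pr x} => PZ)) (Measure.pi fun _ : ι => PZ) :=
    MeasurePreserving.symm e MP
  have fact1 : ∀ q : ({x : ι // pr x} → Z) × ({x : ι // ¬ pr x} → Z),
      (e.symm q) k = q.1 (default : {x : ι // pr x}) := by
    intro q
    show (Equiv.piEquivPiSubtypeProd pr (fun _ : ι => Z)).symm q k = _
    simp only [Equiv.piEquivPiSubtypeProd, Equiv.coe_fn_symm_mk]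
    rw [hdefault]; exact dif_pos hk
  have facte : ∀ (a : {x : ι // pr x} → Z) b (x : ι) (hx : ¬ pr x),
      (e.symm (a, b)) x = b ⟨x, hx⟩ := by
    intro a b x hx
    show (Equiv.piEquivPiSubtypeProd pr (fun _ : ι => Z)).symm (a, b) x = _
    simp only [Equiv.piEquivPiSubtypeProd, Equiv.coe_fn_symm_mk]
    exact dif_neg hx
  have fact2 : ∀ a a' b, G (e.symm (a, b)) = G (e.symm (a', b)) := by
    intro a a' b
    have hupd : e.symm (a, b) = Function.update (e.symm (a', b)) k (a (default : {x : ι // pr x})) := by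
      funext x
      by_cases hx : pr x
      · have hxk : x = k := hprk x hx
        subst hxk
        rw [Function.update_self]
        exact fact1 (a, b)
      · have hxk : x ≠ k := fun h => hx (h ▸ hk)
        rw [Function.update_of_ne hxk, facte a b x hx, facte a' b x hx]
    rw [hupd, hind]
  set Φ : (({x : ι // ¬ pr x} → Z) × Z) → ℝ :=
    fun qz => G (e.symm (fun _ => qz.2, qz.1)) qz.2 with hΦ
  have hΦmeas : Measurable Φ := by
    have hrepr : Φ = Function.uncurry G ∘
        (fun qz : ({x : ι // ¬ pr x} → Z) × Z => (e.symm (fun _ => qz.2, qz.1), qz.2)) := rfl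
    rw [hrepr]
    refine hGmeas.comp (Measurable.prodMk ?_ measurable_snd)
    exact e.symm.measurable.comp
      ((measurable_pi_lambda _ fun _ => measurable_snd).prodMk measurable_fst)
  have hΦbd : ∀ qz, |Φ qz| ≤ 1 := fun qz => hGbd _ _
  rw [← MPs.integral_comp e.symm.measurableEmbedding (fun p => G p (p k)),
      ← MPs.integral_comp e.symm.measurableEmbedding (fun p => ∫ z, G p z ∂PZ)]
  have lhs_eq : ∀ q : ({x : ι // pr x} → Z) × ({x : ι // ¬ pr x} → Z),
      G (e.symm q) ((e.symm q) k) = Φ (q.2, q.1 (default : {x : ι // pr x})) := by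
    rintro ⟨a, b⟩
    rw [fact1 (a, b)]
    exact congrFun (fact2 a (fun _ => a (default : {x : ι // pr x})) b) _
  have rhs_eq : ∀ q : ({x : ι // pr x} → Z) × ({x : ι // ¬ pr x} → Z),
      (∫ z, G (e.symm q) z ∂PZ) = ∫ z, Φ (q.2, z) ∂PZ := by
    rintro ⟨a, b⟩
    refine integral_congr_ae (Filter.Eventually.of_forall fun z => ?_)
    exact congrFun (fact2 a (fun _ => z) b) _
  simp_rw [lhs_eq, rhs_eq]
  have hint1 : Integrable (fun q : ({x : ι // pr x} → Z) × ({x : ι // ¬ pr x} → Z) =>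
      Φ (q.2, q.1 (default : {x : ι // pr x})))
      ((Measure.pi fun _ : {x : ι // pr x} => PZ).prod
        (Measure.pi fun _ : {x : ι // ¬ pr x} => PZ)) := by
    refine integrable_of_bdd ?_ 1 fun q => hΦbd _
    exact (hΦmeas.comp (measurable_snd.prodMk
      ((measurable_pi_apply _).comp measurable_fst))).aestronglyMeasurable
  have hint2 : Integrable (fun q : ({x : ι // pr x} → Z) × ({x : ι // ¬ pr x} → Z) =>
      ∫ z, Φ (q.2, z) ∂PZ)
      ((Measure.pi fun _ : {x : ι // pr x} => PZ).prod
        (Measure.pi fun _ : {x : ι // ¬ pr x} => PZ)) := by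
    refine integrable_of_bdd ?_ 1 fun q => ?_
    · have hSM : StronglyMeasurable fun b => ∫ z, Φ (b, z) ∂PZ :=
        StronglyMeasurable.integral_prod_right' (f := Φ) hΦmeas.stronglyMeasurable
      exact (hSM.measurable.comp measurable_snd).aestronglyMeasurable
    · calc |∫ z, Φ (q.2, z) ∂PZ| ≤ ∫ z, ‖Φ (q.2, z)‖ ∂PZ := by
            simpa [Real.norm_eq_abs] using
              norm_integral_le_integral_norm (fun z => Φ (q.2, z)) (μ := PZ)
        _ ≤ ∫ _z, (1:ℝ) ∂PZ := by
            refine integral_mono ?_ (integrable_const 1) fun z => by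
              simpa [Real.norm_eq_abs] using hΦbd (q.2, z)
            exact integrable_of_bdd ((hΦmeas.comp
              (measurable_const.prodMk measurable_id)).norm.aestronglyMeasurable) 1
              fun z => by simpa [Real.norm_eq_abs, abs_abs] using hΦbd (q.2, z)
        _ = 1 := by simp
  rw [integral_prod _ hint1, integral_prod _ hint2]
  have hconst : (∫ a, ∫ b, ∫ z, Φ (b, z) ∂PZ ∂(Measure.pi fun _ : {x : ι // ¬ pr x} => PZ)
      ∂(Measure.pi fun _ : {x : ι // pr x} => PZ))
      = ∫ b, ∫ z, Φ (b, z) ∂PZ ∂(Measure.pi fun _ : {x : ι // ¬ pr x} => PZ) := by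
    rw [integral_const]
    simp
  rw [hconst]
  have lhs2 : (∫ a, ∫ b, Φ (b, a (default : {x : ι // pr x})) ∂(Measure.pi fun _ : {x : ι // ¬ pr x} => PZ)
      ∂(Measure.pi fun _ : {x : ι // pr x} => PZ)) =
      ∫ a : {x : ι // pr x} → Z,
        (fun z => ∫ b, Φ (b, z) ∂(Measure.pi fun _ : {x : ι // ¬ pr x} => PZ))
          ((MeasurableEquiv.funUnique {x : ι // pr x} Z) a)
        ∂(Measure.pi fun _ : {x : ι // pr x} => PZ) := by
    refine integral_congr_ae (Filter.Eventually.of_forall fun a => ?_)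
    rfl
  rw [lhs2]
  have MPu : MeasurePreserving (MeasurableEquiv.funUnique {x : ι // pr x} Z)
      (Measure.pi fun _ : {x : ι // pr x} => PZ) PZ := by
    refine ⟨(MeasurableEquiv.funUnique {x : ι // pr x} Z).measurable, ?_⟩
    ext s hs
    rw [Measure.map_apply (MeasurableEquiv.funUnique {x : ι // pr x} Z).measurable hs]
    have hpre : (MeasurableEquiv.funUnique {x : ι // pr x} Z) ⁻¹' s =
        Set.pi Set.univ (fun _ : {x : ι // pr x} => s) := by
      ext a
      simp only [Set.mem_preimage, Set.mem_pi, Set.mem_univ, forall_true_left]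
      constructor
      · intro h i
        have : i = default := Subsingleton.elim _ _
        rw [this]; exact h
      · intro h; exact h default
    rw [hpre, Measure.pi_pi]
    rw [Finset.prod_const, Finset.card_univ, Fintype.card_unique, pow_one]
  rw [MPu.integral_comp (MeasurableEquiv.funUnique {x : ι // pr x} Z).measurableEmbedding
    (fun z => ∫ b, Φ (b, z) ∂(Measure.pi fun _ : {x : ι // ¬ pr x} => PZ))]
  have hswap := integral_integral_swap (f := fun (b : {x : ι // ¬ pr x} → Z) (z : Z) => Φ (b, z))
    (μ := (Measure.pi fun _ : {x : ι // ¬ pr x} => PZ)) (ν := PZ) (by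
      refine integrable_of_bdd ?_ 1 fun q => hΦbd _
      exact hΦmeas.aestronglyMeasurable)
  rw [← hswap]


lemma coin_apply_set (B : Set Bool) :
    coin B = 2⁻¹ * (B.indicator 1 false) + 2⁻¹ * (B.indicator 1 true) := by
  have hBm : MeasurableSet B := B.toFinite.measurableSet
  rw [coin, PMF.toMeasure_apply _ hBm, tsum_bool]
  have h1 : ∀ b, B.indicator (PMF.uniformOfFintype Bool) b = 2⁻¹ * (B.indicator 1 b) := by
    intro b
    by_cases hb : b ∈ B
    · simp [Set.indicator_of_mem hb, PMF.uniformOfFintype_apply]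
    · simp [Set.indicator_of_notMem hb]
  rw [h1, h1]

lemma ennreal_bound {x : ℝ≥0∞} (hx : x ≤ 1) :
    x * (‖Real.log ((2*x).toReal)‖₊ : ℝ≥0∞) ≤ 2 := by
  have hxt : x ≠ ∞ := (lt_of_le_of_lt hx ENNReal.one_lt_top).ne
  have ht0 : (0:ℝ) ≤ x.toReal := ENNReal.toReal_nonneg
  have ht1 : x.toReal ≤ 1 := by
    simpa using ENNReal.toReal_mono (by norm_num) hx
  have h2x : (2*x).toReal = 2*x.toReal := by
    rw [ENNReal.toReal_mul]; norm_num
  rw [h2x, ← enorm_eq_nnnorm, Real.enorm_eq_ofReal_abs]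
  nth_rewrite 1 [← ENNReal.ofReal_toReal hxt]
  rw [← ENNReal.ofReal_mul ht0]
  calc ENNReal.ofReal (x.toReal * |Real.log (2*x.toReal)|) ≤ ENNReal.ofReal 2 :=
      ENNReal.ofReal_le_ofReal (mul_abs_log_le_two ht0 ht1)
    _ = 2 := by norm_num

section StepC
variable {Z W : Type*} [MeasurableSpace Z] [MeasurableSpace W]

lemma stepC {n : ℕ} (loss : W → Z → ℝ)
    (hlossmeas : Measurable (Function.uncurry loss))
    (hloss : ∀ w z, loss w z ∈ Set.Icc (0:ℝ) 1)
    (i : Fin n)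
    (PWZS : Measure (((Fin n × Bool → Z) × (Fin n → Bool)) × W))
    [IsProbabilityMeasure PWZS]
    (hnull : ∀ᵐ x ∂PWZS, loss x.2 (x.1.1 (i, x.1.2 i)) = 0) :
    Real.log 2 * ∫ x, loss x.2 (x.1.1 (i, !x.1.2 i)) ∂PWZS ≤
      klDiv' (PWZS.map fun x => ((x.1.1, x.1.2 i), x.2))
        (((PWZS.map fun x => (x.1.1, x.2)).prod coin).map fun q => ((q.1.1, q.2), q.1.2)) := by

  classical
  have hproj : Measurable fun x : ((Fin n × Bool → Z) × (Fin n → Bool)) × W => (x.1.1, x.2) :=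
    (measurable_fst.fst).prodMk measurable_snd
  have hSmeas : ∀ b : Bool,
      MeasurableSet {x : ((Fin n × Bool → Z) × (Fin n → Bool)) × W | x.1.2 i = b} := fun b => by
    have hm : Measurable fun x : ((Fin n × Bool → Z) × (Fin n → Bool)) × W => x.1.2 i :=
      (measurable_pi_apply i).comp measurable_fst.snd
    exact hm (measurableSet_singleton b)
  set μ : Measure ((Fin n × Bool → Z) × W) := PWZS.map (fun x => (x.1.1, x.2)) with hμ
  set μB : Bool → Measure ((Fin n × Bool → Z) × W) :=
    fun b => (PWZS.restrict {x | x.1.2 i = b}).map (fun x => (x.1.1, x.2)) with hμB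
  set f : Bool → (Fin n × Bool → Z) × W → ℝ≥0∞ := fun b => (μB b).rnDeriv μ with hf
  have hjm : ∀ b : Bool, Measurable fun y : (Fin n × Bool → Z) × W => (((y.1, b), y.2) :
      ((Fin n × Bool → Z) × Bool) × W) :=
    fun b => (measurable_fst.prodMk measurable_const).prodMk measurable_snd
  haveI : IsProbabilityMeasure μ := Measure.isProbabilityMeasure_map hproj.aemeasurable
  haveI hμBfin : ∀ b, IsFiniteMeasure (μB b) := fun b => by
    refine ⟨?_⟩
    rw [hμB, Measure.map_apply hproj MeasurableSet.univ]
    exact lt_of_le_of_lt (measure_mono (Set.subset_univ _)) (measure_lt_top _ _)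
  have hle : ∀ b, μB b ≤ μ := by
    intro b
    refine Measure.le_iff.mpr fun s hs => ?_
    rw [hμB, hμ, Measure.map_apply hproj hs, Measure.map_apply hproj hs,
      Measure.restrict_apply (hproj hs)]
    exact measure_mono Set.inter_subset_left
  have hac : ∀ b, μB b ≪ μ := fun b => (hle b).absolutelyContinuous
  have hcompl : {x : ((Fin n × Bool → Z) × (Fin n → Bool)) × W | x.1.2 i = true} =
      {x : ((Fin n × Bool → Z) × (Fin n → Bool)) × W | x.1.2 i = false}ᶜ := by
    ext x; simp
  have hsum : μB false + μB true = μ := by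
    rw [hμB, hμ, ← Measure.map_add _ _ hproj]
    congr 1
    rw [hcompl]
    exact Measure.restrict_add_restrict_compl (hSmeas false)
  have hgmeas : Measurable fun x : ((Fin n × Bool → Z) × (Fin n → Bool)) × W =>
      (((x.1.1, x.1.2 i), x.2) : ((Fin n × Bool → Z) × Bool) × W) :=
    by
    have hm : Measurable fun x : ((Fin n × Bool → Z) × (Fin n → Bool)) × W => x.1.2 i :=
      (measurable_pi_apply i).comp measurable_fst.snd
    exact ((measurable_fst.fst).prodMk hm).prodMk measurable_snd
  have hmapb : ∀ b, (PWZS.restrict {x | x.1.2 i = b}).map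
        (fun x => (((x.1.1, x.1.2 i), x.2) : ((Fin n × Bool → Z) × Bool) × W)) =
      (μB b).map (fun y => ((y.1, b), y.2)) := by
    intro b
    rw [hμB, Measure.map_map (hjm b) hproj]
    refine Measure.map_congr ?_
    refine (ae_restrict_iff' (hSmeas b)).mpr (Filter.Eventually.of_forall fun x hx => ?_)
    simp only [Set.mem_setOf_eq] at hx
    simp [Function.comp, hx]
  have hPi : PWZS.map (fun x => (((x.1.1, x.1.2 i), x.2) : ((Fin n × Bool → Z) × Bool) × W)) =
      (μB false).map (fun y => ((y.1, false), y.2)) +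
        (μB true).map (fun y => ((y.1, true), y.2)) := by
    conv_lhs => rw [← Measure.restrict_add_restrict_compl (μ := PWZS) (hSmeas false), ← hcompl]
    rw [Measure.map_add _ _ hgmeas, hmapb false, hmapb true]
  have hqmeas : Measurable fun q : ((Fin n × Bool → Z) × W) × Bool =>
      ((((q.1.1, q.2), q.1.2)) : ((Fin n × Bool → Z) × Bool) × W) :=
    ((measurable_fst.fst).prodMk measurable_snd).prodMk measurable_fst.snd
  have hQi : ((μ.prod coin).map fun q => ((q.1.1, q.2), q.1.2)) =
      (((2:ℝ≥0∞)⁻¹ • μ).map (fun y => ((y.1, false), y.2))) +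
        (((2:ℝ≥0∞)⁻¹ • μ).map (fun y => ((y.1, true), y.2))) := by
    ext s hs
    rw [Measure.map_apply hqmeas hs, Measure.prod_apply (hqmeas hs)]
    have hstep : ∀ y : (Fin n × Bool → Z) × W,
        coin (Prod.mk y ⁻¹' ((fun q : ((Fin n × Bool → Z) × W) × Bool =>
            ((((q.1.1, q.2), q.1.2)) : ((Fin n × Bool → Z) × Bool) × W)) ⁻¹' s)) =
          2⁻¹ * ((fun y => (((y.1, false), y.2) : ((Fin n × Bool → Z) × Bool) × W)) ⁻¹' s).indicator 1 y +
          2⁻¹ * ((fun y => (((y.1, true), y.2) : ((Fin n × Bool → Z) × Bool) × W)) ⁻¹' s).indicator 1 y := by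
      intro y
      rw [coin_apply_set]
      rfl
    rw [lintegral_congr hstep]
    rw [lintegral_add_left (by
      exact (measurable_const.mul ((measurable_const (a := (1:ℝ≥0∞))).indicator
        ((hjm false) hs))))]
    rw [lintegral_const_mul' _ _ (by norm_num : (2:ℝ≥0∞)⁻¹ ≠ ∞),
        lintegral_const_mul' _ _ (by norm_num : (2:ℝ≥0∞)⁻¹ ≠ ∞)]
    rw [lintegral_indicator_one ((hjm false) hs), lintegral_indicator_one ((hjm true) hs)]
    rw [Measure.add_apply, Measure.map_apply (hjm false) hs, Measure.map_apply (hjm true) hs,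
      Measure.smul_apply, Measure.smul_apply, smul_eq_mul, smul_eq_mul]

  set h : ((Fin n × Bool → Z) × Bool) × W → ℝ≥0∞ := fun x => 2 * f x.1.2 (x.1.1, x.2) with hh
  have hfmeas : ∀ b, Measurable (f b) := fun b => Measure.measurable_rnDeriv _ _
  have hhm : Measurable h := by
    have h1 : Measurable fun p : ((Fin n × Bool → Z) × W) × Bool => f p.2 p.1 := by
      have h2 : (fun p : ((Fin n × Bool → Z) × W) × Bool => f p.2 p.1) =
          fun p => if p.2 = true then f true p.1 else f false p.1 := by
        funext p; cases hp : p.2 <;> simp [hp]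
      rw [h2]
      exact Measurable.ite (measurable_snd (measurableSet_singleton true))
        ((hfmeas true).comp measurable_fst) ((hfmeas false).comp measurable_fst)
    have h3 : h = (fun p : ((Fin n × Bool → Z) × W) × Bool => 2 * f p.2 p.1) ∘
        (fun x : ((Fin n × Bool → Z) × Bool) × W => ((x.1.1, x.2), x.1.2)) := rfl
    rw [h3]
    exact (measurable_const.mul h1).comp
      (((measurable_fst.fst).prodMk measurable_snd).prodMk measurable_fst.snd)
  have hWD : ∀ b : Bool, (((2:ℝ≥0∞)⁻¹ • μ).map (fun y => (((y.1, b), y.2) :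
      ((Fin n × Bool → Z) × Bool) × W))).withDensity h
      = (μB b).map (fun y => ((y.1, b), y.2)) := by
    intro b
    ext s hs
    rw [withDensity_apply _ hs, Measure.restrict_map (hjm b) hs,
      lintegral_map hhm (hjm b), Measure.map_apply (hjm b) hs]
    have hcomp : ∀ y : (Fin n × Bool → Z) × W, h ((y.1, b), y.2) = 2 * f b y := fun y => rfl
    rw [lintegral_congr hcomp, Measure.restrict_smul, lintegral_smul_measure,
      lintegral_const_mul' _ _ (by norm_num : (2:ℝ≥0∞) ≠ ∞), smul_eq_mul,
      ← mul_assoc, ENNReal.inv_mul_cancel (by norm_num) (by norm_num), one_mul]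
    exact Measure.setLIntegral_rnDeriv (hac b) _
  have hWD' : (((μ.prod coin).map fun q => ((q.1.1, q.2), q.1.2)).withDensity h)
      = PWZS.map (fun x => ((x.1.1, x.1.2 i), x.2)) := by
    rw [hQi, withDensity_add_measure, hWD false, hWD true, ← hPi]
  haveI hQprob : IsProbabilityMeasure ((μ.prod coin).map fun q : ((Fin n × Bool → Z) × W) × Bool =>
      ((((q.1.1, q.2), q.1.2)) : ((Fin n × Bool → Z) × Bool) × W)) :=
    Measure.isProbabilityMeasure_map hqmeas.aemeasurable
  haveI hPprob : IsProbabilityMeasure (PWZS.map (fun x => (((x.1.1, x.1.2 i), x.2) :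
      ((Fin n × Bool → Z) × Bool) × W))) :=
    Measure.isProbabilityMeasure_map hgmeas.aemeasurable
  set Qi : Measure (((Fin n × Bool → Z) × Bool) × W) :=
    (μ.prod coin).map (fun q => ((q.1.1, q.2), q.1.2)) with hQidef
  set Pi : Measure (((Fin n × Bool → Z) × Bool) × W) :=
    PWZS.map (fun x => ((x.1.1, x.1.2 i), x.2)) with hPidef
  have hrn : Pi.rnDeriv Qi =ᵐ[Qi] h := by
    rw [← hWD']
    exact Measure.rnDeriv_withDensity Qi hhm
  have hacPQ : Pi ≪ Qi := by rw [← hWD']; exact withDensity_absolutelyContinuous Qi h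
  have hrnPi : Pi.rnDeriv Qi =ᵐ[Pi] h := hrn.filter_mono hacPQ.ae_le
  set g : ((Fin n × Bool → Z) × Bool) × W → ℝ := fun x => Real.log ((h x).toReal) with hgdef
  have hgm : Measurable g := Real.measurable_log.comp (ENNReal.measurable_toReal.comp hhm)
  have hklDiv : klDiv' Pi Qi = ∫ x, g x ∂Pi := by
    rw [klDiv']
    refine integral_congr_ae (hrnPi.mono fun x hx => ?_)
    simp only [hx]
    rfl
  have hsum' : ∀ᵐ y ∂μ, f false y + f true y = 1 := by
    have h0 := Measure.rnDeriv_add' (μB false) (μB true) μ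
    have h1 : (μB false + μB true).rnDeriv μ =ᵐ[μ] fun _ => 1 := by
      rw [hsum]; exact Measure.rnDeriv_self μ
    filter_upwards [h0, h1] with y hy0 hy1
    exact (hy0.symm.trans hy1)
  have hble : ∀ b, ∀ᵐ y ∂μ, f b y ≤ 1 := by
    intro b
    filter_upwards [hsum'] with y hy
    cases b
    · calc f false y ≤ f false y + f true y := le_self_add
        _ = 1 := hy
    · calc f true y ≤ f false y + f true y := le_add_self
        _ = 1 := hy
  have hwdb : ∀ b, μ.withDensity (f b) = μB b := fun b =>
    Measure.withDensity_rnDeriv_eq _ _ (hac b)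
  have hIntb : ∀ b, Integrable (fun y => g ((y.1, b), y.2)) (μB b) := by
    intro b
    have hmg : Measurable fun y : (Fin n × Bool → Z) × W => g ((y.1, b), y.2) :=
      hgm.comp (hjm b)
    refine ⟨hmg.aestronglyMeasurable, ?_⟩
    rw [HasFiniteIntegral, ← hwdb b,
      lintegral_withDensity_eq_lintegral_mul _ (hfmeas b) hmg.enorm]
    calc ∫⁻ y, ((f b) * fun y : (Fin n × Bool → Z) × W => (‖g ((y.1, b), y.2)‖₊ : ℝ≥0∞)) y ∂μ
        ≤ ∫⁻ _y, 2 ∂μ := by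
          refine lintegral_mono_ae ?_
          filter_upwards [hble b] with y hy
          exact ennreal_bound hy
      _ < ∞ := by
          rw [lintegral_const]
          exact ENNReal.mul_lt_top (by norm_num) (measure_lt_top _ _)
  have hIntMap : ∀ b, Integrable g ((μB b).map (fun y => ((y.1, b), y.2))) := by
    intro b
    rw [integrable_map_measure hgm.aestronglyMeasurable (hjm b).aemeasurable]
    exact hIntb b

  have hslice : ∫ x, g x ∂Pi =
      (∫ y, g ((y.1, false), y.2) ∂(μB false)) + ∫ y, g ((y.1, true), y.2) ∂(μB true) := by
    rw [hPi, integral_add_measure (hIntMap false) (hIntMap true),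
      integral_map (hjm false).aemeasurable hgm.aestronglyMeasurable,
      integral_map (hjm true).aemeasurable hgm.aestronglyMeasurable]
  have hVb : ∀ b, ∫ y, g ((y.1, b), y.2) ∂(μB b) =
      ∫ y, ((f b y).toNNReal : ℝ) • g ((y.1, b), y.2) ∂μ := by
    intro b
    have hcongr : μ.withDensity (fun y => ((f b y).toNNReal : ℝ≥0∞)) = μB b := by
      rw [← hwdb b]
      refine withDensity_congr_ae ?_
      filter_upwards [hble b] with y hy
      exact ENNReal.coe_toNNReal (lt_of_le_of_lt hy ENNReal.one_lt_top).ne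
    rw [← hcongr]
    exact integral_withDensity_eq_integral_smul
      (ENNReal.measurable_toNNReal.comp (hfmeas b)) _
  set φ : Bool → (Fin n × Bool → Z) × W → ℝ :=
    fun b y => (f b y).toReal * Real.log (2 * (f b y).toReal) with hφdef
  have hφc : ∀ b, ∀ᵐ y ∂μ, ((f b y).toNNReal : ℝ) • g ((y.1, b), y.2) = φ b y := by
    intro b
    refine Filter.Eventually.of_forall fun y => ?_
    have h1 : ((f b y).toNNReal : ℝ) = (f b y).toReal := rfl
    have h2 : g ((y.1, b), y.2) = Real.log ((2 * f b y).toReal) := rfl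
    rw [smul_eq_mul, h1, h2, ENNReal.toReal_mul]
    norm_num
    rfl
  have hφm : ∀ b, Measurable (φ b) := fun b =>
    (ENNReal.measurable_toReal.comp (hfmeas b)).mul
      (Real.measurable_log.comp
        (measurable_const.mul (ENNReal.measurable_toReal.comp (hfmeas b))))
  have hφbd : ∀ b, ∀ᵐ y ∂μ, |φ b y| ≤ 2 := by
    intro b
    filter_upwards [hble b] with y hy
    have ht1 : (f b y).toReal ≤ 1 := by
      simpa using ENNReal.toReal_mono (by norm_num) hy
    calc |φ b y| = (f b y).toReal * |Real.log (2 * (f b y).toReal)| := by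
          rw [hφdef, abs_mul, abs_of_nonneg ENNReal.toReal_nonneg]
      _ ≤ 2 := mul_abs_log_le_two ENNReal.toReal_nonneg ht1
  have hφInt : ∀ b, Integrable (φ b) μ := fun b =>
    Integrable.mono' (integrable_const 2) (hφm b).aestronglyMeasurable
      (by filter_upwards [hφbd b] with y hy; simpa [Real.norm_eq_abs] using hy)
  have hkl2 : klDiv' Pi Qi = ∫ y, (φ false y + φ true y) ∂μ := by
    rw [hklDiv, hslice, hVb false, hVb true,
      integral_congr_ae (hφc false), integral_congr_ae (hφc true),
      ← integral_add (hφInt false) (hφInt true)]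
  set E : Bool → Set ((Fin n × Bool → Z) × W) := fun b => {y | 0 < loss y.2 (y.1 (i, b))} with hEdef
  have hEmeas : ∀ b, MeasurableSet (E b) := by
    intro b
    have hm : Measurable fun y : (Fin n × Bool → Z) × W => loss y.2 (y.1 (i, b)) :=
      hlossmeas.comp (measurable_snd.prodMk ((measurable_pi_apply (i, b)).comp measurable_fst))
    exact measurableSet_lt measurable_const hm
  have hnull2 : ∀ b, μB b (E b) = 0 := by
    intro b
    rw [hμB, Measure.map_apply hproj (hEmeas b), Measure.restrict_apply (hproj (hEmeas b))]
    have hzero : PWZS {x : ((Fin n × Bool → Z) × (Fin n → Bool)) × W |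
        ¬ loss x.2 (x.1.1 (i, x.1.2 i)) = 0} = 0 := ae_iff.mp hnull
    refine measure_mono_null ?_ hzero
    rintro x ⟨hx1, hx2⟩
    simp only [Set.mem_setOf_eq] at hx1 hx2 ⊢
    rw [hx2]
    exact ne_of_gt hx1
  have hvb : ∀ b, f b =ᵐ[μ.restrict (E b)] 0 := by
    intro b
    refine (lintegral_eq_zero_iff (hfmeas b)).mp ?_
    rw [Measure.setLIntegral_rnDeriv (hac b)]
    exact hnull2 b
  have hA : ∀ b, ∀ᵐ y ∂μ, y ∈ E b → f b y = 0 := fun b =>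
    (ae_restrict_iff' (hEmeas b)).mp (hvb b)
  have hpt : ∀ᵐ y ∂μ,
      Set.indicator (E false ∪ E true) (fun _ => Real.log 2) y ≤ φ false y + φ true y := by
    filter_upwards [hsum', hA false, hA true] with y h1 h2 h3
    have hleF : f false y ≤ 1 := by rw [← h1]; exact le_self_add
    have hleT : f true y ≤ 1 := by rw [← h1]; exact le_add_self
    have hfinF : f false y ≠ ∞ := (lt_of_le_of_lt hleF ENNReal.one_lt_top).ne
    have hfinT : f true y ≠ ∞ := (lt_of_le_of_lt hleT ENNReal.one_lt_top).ne
    have hab : (f false y).toReal + (f true y).toReal = 1 := by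
      rw [← ENNReal.toReal_add hfinF hfinT, h1]
      simp
    have ha0 : (0:ℝ) ≤ (f false y).toReal := ENNReal.toReal_nonneg
    have hb0 : (0:ℝ) ≤ (f true y).toReal := ENNReal.toReal_nonneg
    by_cases hy : y ∈ E false ∪ E true
    · rw [Set.indicator_of_mem hy]
      rcases hy with hyf | hyt
      · have haz : (f false y).toReal = 0 := by rw [h2 hyf]; simp
        have hbz : (f true y).toReal = 1 := by rw [haz] at hab; linarith
        have : φ false y + φ true y = Real.log 2 := by
          rw [hφdef]
          simp only [haz, hbz]
          norm_num
        rw [this]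
      · have hbz : (f true y).toReal = 0 := by rw [h3 hyt]; simp
        have haz : (f false y).toReal = 1 := by rw [hbz] at hab; linarith
        have : φ false y + φ true y = Real.log 2 := by
          rw [hφdef]
          simp only [haz, hbz]
          norm_num
        rw [this]
    · rw [Set.indicator_of_notMem hy]
      exact phi_nonneg ha0 hb0 hab
  have hEu : MeasurableSet (E false ∪ E true) := (hEmeas false).union (hEmeas true)
  have hmain : Real.log 2 * (μ (E false ∪ E true)).toReal ≤ klDiv' Pi Qi := by
    rw [hkl2]
    calc Real.log 2 * (μ (E false ∪ E true)).toReal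
        = ∫ y, Set.indicator (E false ∪ E true) (fun _ => Real.log 2) y ∂μ := by
          rw [integral_indicator_const _ hEu, smul_eq_mul, mul_comm]
          rfl
      _ ≤ ∫ y, (φ false y + φ true y) ∂μ :=
          integral_mono_ae ((integrable_const _).indicator hEu)
            ((hφInt false).add (hφInt true)) hpt
  -- measurability of the test-loss integrand
  have hm1 : Measurable fun x : ((Fin n × Bool → Z) × (Fin n → Bool)) × W => x.1.2 i :=
    (measurable_pi_apply i).comp measurable_fst.snd
  have hmnot : Measurable fun x : ((Fin n × Bool → Z) × (Fin n → Bool)) × W => !x.1.2 i :=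
    (measurable_of_countable fun b => !b).comp hm1
  have hmev : Measurable fun p : (Fin n × Bool → Z) × Bool => p.1 (i, p.2) := by
    have hrepr : (fun p : (Fin n × Bool → Z) × Bool => p.1 (i, p.2)) =
        fun p => if p.2 = true then p.1 (i, true) else p.1 (i, false) := by
      funext p; cases hp : p.2 <;> simp [hp]
    rw [hrepr]
    exact Measurable.ite (measurable_snd (measurableSet_singleton true))
      ((measurable_pi_apply (i, true)).comp measurable_fst)
      ((measurable_pi_apply (i, false)).comp measurable_fst)
  have hmeasl : Measurable fun x : ((Fin n × Bool → Z) × (Fin n → Bool)) × W =>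
      loss x.2 (x.1.1 (i, !x.1.2 i)) :=
    hlossmeas.comp (measurable_snd.prodMk (hmev.comp (measurable_fst.fst.prodMk hmnot)))
  have htest : ∫ x, loss x.2 (x.1.1 (i, !x.1.2 i)) ∂PWZS ≤ (μ (E false ∪ E true)).toReal := by
    have hpre : μ (E false ∪ E true) =
        PWZS ((fun x : ((Fin n × Bool → Z) × (Fin n → Bool)) × W => (x.1.1, x.2)) ⁻¹'
          (E false ∪ E true)) := Measure.map_apply hproj hEu
    rw [hpre]
    calc ∫ x, loss x.2 (x.1.1 (i, !x.1.2 i)) ∂PWZS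
        ≤ ∫ x, Set.indicator
            ((fun x : ((Fin n × Bool → Z) × (Fin n → Bool)) × W => (x.1.1, x.2)) ⁻¹'
              (E false ∪ E true)) (fun _ => (1:ℝ)) x ∂PWZS := by
          refine integral_mono ?_ ((integrable_const _).indicator (hproj hEu)) fun x => ?_
          · exact integrable_of_bdd hmeasl.aestronglyMeasurable 1
              (fun x => abs_le.mpr ⟨by linarith [(hloss x.2 (x.1.1 (i, !x.1.2 i))).1],
                (hloss x.2 (x.1.1 (i, !x.1.2 i))).2⟩)
          · by_cases hx : 0 < loss x.2 (x.1.1 (i, !x.1.2 i))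
            · have hmem : x ∈ (fun x : ((Fin n × Bool → Z) × (Fin n → Bool)) × W =>
                  (x.1.1, x.2)) ⁻¹' (E false ∪ E true) := by
                cases hb : !x.1.2 i
                · left
                  show 0 < loss x.2 (x.1.1 (i, false))
                  rwa [hb] at hx
                · right
                  show 0 < loss x.2 (x.1.1 (i, true))
                  rwa [hb] at hx
              rw [Set.indicator_of_mem hmem]
              exact (hloss _ _).2
            · have hz : loss x.2 (x.1.1 (i, !x.1.2 i)) = 0 :=
                le_antisymm (not_lt.mp hx) (hloss _ _).1
              rw [hz]
              exact Set.indicator_nonneg (fun _ _ => zero_le_one) _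
      _ = (PWZS ((fun x : ((Fin n × Bool → Z) × (Fin n → Bool)) × W => (x.1.1, x.2)) ⁻¹'
            (E false ∪ E true))).toReal := by
          rw [integral_indicator_const _ (hproj hEu)]
          simp
          rfl
  calc Real.log 2 * ∫ x, loss x.2 (x.1.1 (i, !x.1.2 i)) ∂PWZS
      ≤ Real.log 2 * (μ (E false ∪ E true)).toReal :=
        mul_le_mul_of_nonneg_left htest (Real.log_nonneg one_le_two)
    _ ≤ klDiv' Pi Qi := hmain

end StepC

lemma abs_integral_le_one {α : Type*} [MeasurableSpace α] (ν : Measure α) [IsProbabilityMeasure ν]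
    {f : α → ℝ} (hm : AEStronglyMeasurable f ν) (h : ∀ x, |f x| ≤ 1) : |∫ x, f x ∂ν| ≤ 1 := by
  calc |∫ x, f x ∂ν| ≤ ∫ x, ‖f x‖ ∂ν := by
        simpa [Real.norm_eq_abs] using norm_integral_le_integral_norm f (μ := ν)
    _ ≤ ∫ _x, (1:ℝ) ∂ν := integral_mono
        (integrable_of_bdd hm.norm 1 (fun x => by
          simpa [abs_abs, Real.norm_eq_abs] using h x)) (integrable_const 1)
        (fun x => by simpa [Real.norm_eq_abs] using h x)
    _ = 1 := by simp

section StepA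
variable {Z W : Type*} [MeasurableSpace Z] [MeasurableSpace W]

lemma stepA {n : ℕ} (PZ : Measure Z) [IsProbabilityMeasure PZ]
    (loss : W → Z → ℝ) (hlossmeas : Measurable (Function.uncurry loss))
    (hloss : ∀ w z, loss w z ∈ Set.Icc (0:ℝ) 1)
    (K : Kernel ((Fin n × Bool → Z) × (Fin n → Bool)) W) [IsMarkovKernel K]
    (hK : ∀ zt s zt' s', (∀ j, zt (j, s j) = zt' (j, s' j)) → K (zt, s) = K (zt', s'))
    (PS : Measure (Fin n → Bool)) [IsProbabilityMeasure PS]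
    (i : Fin n) :
    ∫ x, loss x.2 (x.1.1 (i, !x.1.2 i))
        ∂(((Measure.pi fun _ : Fin n × Bool => PZ).prod PS) ⊗ₘ K) =
    ∫ x, popLoss PZ loss x.2
        ∂(((Measure.pi fun _ : Fin n × Bool => PZ).prod PS) ⊗ₘ K) := by
  have habs : ∀ w z, |loss w z| ≤ 1 := fun w z =>
    abs_le.mpr ⟨by linarith [(hloss w z).1], (hloss w z).2⟩
  have hpopm : StronglyMeasurable (popLoss PZ loss) :=
    StronglyMeasurable.integral_prod_right' (f := Function.uncurry loss)
      hlossmeas.stronglyMeasurable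
  have hpopbd : ∀ w, |popLoss PZ loss w| ≤ 1 := fun w =>
    abs_integral_le_one PZ (hlossmeas.comp measurable_prodMk_left).aestronglyMeasurable
      (fun z => habs w z)
  have hm1 : Measurable fun x : ((Fin n × Bool → Z) × (Fin n → Bool)) × W => x.1.2 i :=
    (measurable_pi_apply i).comp measurable_fst.snd
  have hmnot : Measurable fun x : ((Fin n × Bool → Z) × (Fin n → Bool)) × W => !x.1.2 i :=
    (measurable_of_countable fun b => !b).comp hm1
  have hmev : Measurable fun p : (Fin n × Bool → Z) × Bool => p.1 (i, p.2) := by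
    have hrepr : (fun p : (Fin n × Bool → Z) × Bool => p.1 (i, p.2)) =
        fun p => if p.2 = true then p.1 (i, true) else p.1 (i, false) := by
      funext p; cases hp : p.2 <;> simp [hp]
    rw [hrepr]
    exact Measurable.ite (measurable_snd (measurableSet_singleton true))
      ((measurable_pi_apply (i, true)).comp measurable_fst)
      ((measurable_pi_apply (i, false)).comp measurable_fst)
  have hmeasl : Measurable fun x : ((Fin n × Bool → Z) × (Fin n → Bool)) × W =>
      loss x.2 (x.1.1 (i, !x.1.2 i)) :=
    hlossmeas.comp (measurable_snd.prodMk (hmev.comp (measurable_fst.fst.prodMk hmnot)))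
  have hInt1 : Integrable (fun x : ((Fin n × Bool → Z) × (Fin n → Bool)) × W =>
      loss x.2 (x.1.1 (i, !x.1.2 i)))
      (((Measure.pi fun _ : Fin n × Bool => PZ).prod PS) ⊗ₘ K) :=
    integrable_of_bdd hmeasl.aestronglyMeasurable 1 (fun x => habs _ _)
  have hInt2 : Integrable (fun x : ((Fin n × Bool → Z) × (Fin n → Bool)) × W =>
      popLoss PZ loss x.2)
      (((Measure.pi fun _ : Fin n × Bool => PZ).prod PS) ⊗ₘ K) :=
    integrable_of_bdd ((hpopm.comp_measurable measurable_snd).aestronglyMeasurable) 1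
      (fun x => hpopbd _)
  rw [Measure.integral_compProd hInt1, Measure.integral_compProd hInt2]
  have hA : StronglyMeasurable fun p : (Fin n × Bool → Z) × (Fin n → Bool) =>
      ∫ w, loss w (p.1 (i, !p.2 i)) ∂(K p) := by
    refine StronglyMeasurable.integral_kernel_prod_right' (κ := K)
      (f := fun q : ((Fin n × Bool → Z) × (Fin n → Bool)) × W =>
        loss q.2 (q.1.1 (i, !q.1.2 i))) ?_
    exact hmeasl.stronglyMeasurable
  have hB : StronglyMeasurable fun p : (Fin n × Bool → Z) × (Fin n → Bool) =>
      ∫ w, popLoss PZ loss w ∂(K p) :=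
    StronglyMeasurable.integral_kernel_prod_right' (κ := K)
      (f := fun q : ((Fin n × Bool → Z) × (Fin n → Bool)) × W => popLoss PZ loss q.2)
      (hpopm.comp_measurable measurable_snd)
  have hIA : Integrable (fun p : (Fin n × Bool → Z) × (Fin n → Bool) =>
      ∫ w, loss w (p.1 (i, !p.2 i)) ∂(K p)) ((Measure.pi fun _ : Fin n × Bool => PZ).prod PS) :=
    integrable_of_bdd hA.aestronglyMeasurable 1 (fun p =>
      abs_integral_le_one (K p) ((hlossmeas.comp
        (measurable_id.prodMk measurable_const)).aestronglyMeasurable) (fun w => habs _ _))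
  have hIB : Integrable (fun p : (Fin n × Bool → Z) × (Fin n → Bool) =>
      ∫ w, popLoss PZ loss w ∂(K p)) ((Measure.pi fun _ : Fin n × Bool => PZ).prod PS) :=
    integrable_of_bdd hB.aestronglyMeasurable 1 (fun p =>
      abs_integral_le_one (K p) hpopm.aestronglyMeasurable hpopbd)
  rw [integral_prod_symm _ hIA, integral_prod_symm _ hIB]
  refine integral_congr_ae (Filter.Eventually.of_forall fun s => ?_)
  have hkey := key_pi PZ ((i, !s i) : Fin n × Bool)
    (G := fun zt z => ∫ w, loss w z ∂K (zt, s)) ?_ ?_ ?_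
  · refine Eq.trans ?_ (Eq.trans hkey ?_)
    · exact integral_congr_ae (Filter.Eventually.of_forall fun zt => rfl)
    · refine integral_congr_ae (Filter.Eventually.of_forall fun zt => ?_)
      have hswap := integral_integral_swap (f := fun (z : Z) (w : W) => loss w z)
        (μ := PZ) (ν := K (zt, s)) (integrable_of_bdd
          ((hlossmeas.comp (measurable_snd.prodMk measurable_fst)).aestronglyMeasurable) 1
          (fun q => habs _ _))
      exact hswap
  · -- measurability of uncurry G
    have hSM : StronglyMeasurable fun p : (Fin n × Bool → Z) × Z =>
        ∫ w, loss w p.2 ∂((K.comap (fun p : (Fin n × Bool → Z) × Z => (p.1, s))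
          (measurable_fst.prodMk measurable_const)) p) :=
      StronglyMeasurable.integral_kernel_prod_right'
        (κ := K.comap (fun p : (Fin n × Bool → Z) × Z => (p.1, s))
          (measurable_fst.prodMk measurable_const))
        (f := fun q : ((Fin n × Bool → Z) × Z) × W => loss q.2 q.1.2)
        (hlossmeas.comp (measurable_snd.prodMk measurable_fst.snd)).stronglyMeasurable
    exact hSM.measurable
  · intro p z
    exact abs_integral_le_one (K (p, s)) ((hlossmeas.comp
      (measurable_id.prodMk measurable_const)).aestronglyMeasurable) (fun w => habs _ _)
  · intro p c
    have hKeq : K (Function.update p (i, !s i) c, s) = K (p, s) := by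
      refine hK _ _ _ _ fun j => ?_
      have hne : ((j, s j) : Fin n × Bool) ≠ (i, !s i) := by
        intro hEq
        obtain ⟨h1, h2⟩ := Prod.mk.inj hEq
        subst h1
        exact (Bool.not_ne_self (s j)) h2.symm
      rw [Function.update_of_ne hne]
    funext z
    show (∫ w, loss w z ∂K (Function.update p (i, !s i) c, s)) = ∫ w, loss w z ∂K (p, s)
    rw [hKeq]

end StepA

/-- Corollary 4: samplewise interpolating bound on the average population
loss via the conditional mutual informations `I(W; Sᵢ | Z̃)`. -/
theorem stmt14
    {Z W : Type*} [MeasurableSpace Z] [MeasurableSpace W]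
    (n : ℕ) (hn : 0 < n)
    (PZ : Measure Z) [IsProbabilityMeasure PZ]
    (loss : W → Z → ℝ) (hlossmeas : Measurable (Function.uncurry loss))
    (hloss : ∀ w z, loss w z ∈ Set.Icc (0:ℝ) 1)
    (K : Kernel ((Fin n × Bool → Z) × (Fin n → Bool)) W) [IsMarkovKernel K]
    (hK : ∀ zt s zt' s', (∀ i, zt (i, s i) = zt' (i, s' i)) → K (zt, s) = K (zt', s'))
    (PZt : Measure ((Fin n × Bool) → Z)) (hPZt : PZt = Measure.pi fun _ => PZ)
    (PS : Measure (Fin n → Bool)) (hPS : PS = Measure.pi fun _ => coin)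
    (PWZS : Measure (((Fin n × Bool → Z) × (Fin n → Bool)) × W))
    (hPWZS : PWZS = (PZt.prod PS).bind fun p => (K p).map fun w => (p, w))
    (hinterp : ∀ᵐ x ∂PWZS, trainLoss n loss x = 0)
:
    ∫ x, popLoss PZ loss x.2 ∂PWZS ≤
      (∑ i : Fin n, klDiv'
          (PWZS.map fun x => ((x.1.1, x.1.2 i), x.2))
          (((PWZS.map fun x => (x.1.1, x.2)).prod coin).map fun q => ((q.1.1, q.2), q.1.2)))
        / (n * Real.log 2) := by
  haveI : IsProbabilityMeasure PZt := by rw [hPZt]; infer_instance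
  haveI : IsProbabilityMeasure PS := by rw [hPS]; infer_instance
  have hmeasbind : Measurable fun p : (Fin n × Bool → Z) × (Fin n → Bool) =>
      ((K p).map fun w => (p, w)) := by
    refine Measure.measurable_of_measurable_coe _ fun s hs => ?_
    simp_rw [Measure.map_apply measurable_prodMk_left hs]
    exact Kernel.measurable_kernel_prodMk_left hs
  have hcomp : PWZS = (PZt.prod PS) ⊗ₘ K := by
    rw [hPWZS]
    ext s hs
    rw [Measure.bind_apply hs hmeasbind.aemeasurable, Measure.compProd_apply hs]
    refine lintegral_congr fun p => ?_
    rw [Measure.map_apply measurable_prodMk_left hs]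
  haveI : IsProbabilityMeasure PWZS := by rw [hcomp]; infer_instance
  have hterm : ∀ i : Fin n, ∀ᵐ x ∂PWZS, loss x.2 (x.1.1 (i, x.1.2 i)) = 0 := by
    intro i
    filter_upwards [hinterp] with x hx
    have hn' : (n:ℝ) ≠ 0 := Nat.cast_ne_zero.mpr hn.ne'
    rw [trainLoss, div_eq_zero_iff] at hx
    have hs0 : ∑ j, loss x.2 (x.1.1 (j, x.1.2 j)) = 0 := by
      rcases hx with h | h
      · exact h
      · exact absurd h hn'
    exact (Finset.sum_eq_zero_iff_of_nonneg fun j _ => (hloss _ _).1).mp hs0 i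
      (Finset.mem_univ i)
  have hTi : ∀ i : Fin n, ∫ x, loss x.2 (x.1.1 (i, !x.1.2 i)) ∂PWZS =
      ∫ x, popLoss PZ loss x.2 ∂PWZS := by
    intro i
    rw [hcomp, hPZt]
    exact stepA PZ loss hlossmeas hloss K hK PS i
  have hCi : ∀ i : Fin n, Real.log 2 * ∫ x, loss x.2 (x.1.1 (i, !x.1.2 i)) ∂PWZS ≤
      klDiv' (PWZS.map fun x => ((x.1.1, x.1.2 i), x.2))
        (((PWZS.map fun x => (x.1.1, x.2)).prod coin).map fun q => ((q.1.1, q.2), q.1.2)) :=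
    fun i => stepC loss hlossmeas hloss i PWZS (hterm i)
  have hlog2 : (0:ℝ) < Real.log 2 := Real.log_pos one_lt_two
  have hn' : (0:ℝ) < n := Nat.cast_pos.mpr hn
  rw [le_div_iff₀ (by positivity)]
  calc (∫ x, popLoss PZ loss x.2 ∂PWZS) * (n * Real.log 2)
      = ∑ _i : Fin n, Real.log 2 * ∫ x, popLoss PZ loss x.2 ∂PWZS := by
        rw [Finset.sum_const, Finset.card_univ, Fintype.card_fin, nsmul_eq_mul]
        ring
    _ = ∑ i : Fin n, Real.log 2 * ∫ x, loss x.2 (x.1.1 (i, !x.1.2 i)) ∂PWZS := by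
        refine Finset.sum_congr rfl fun i _ => ?_
        rw [hTi i]
    _ ≤ ∑ i : Fin n, klDiv'
          (PWZS.map fun x => ((x.1.1, x.1.2 i), x.2))
          (((PWZS.map fun x => (x.1.1, x.2)).prod coin).map fun q => ((q.1.1, q.2), q.1.2)) :=
        Finset.sum_le_sum fun i _ => hCi i
end
end

section
/- (Slow-rate exponential inequality, eq. (31)) In the random-subset setting with n ≥ 2, let Q_{W|Z̃} be a conditional prior whose induced joint measure Q_{W|Z̃}P_{Z̃}P_S is mutually absolutely continuous with P_{WZ̃S}. Then E_{P_{WZ̃S}}[exp(((n−1)/2)·(L_{Z(S̄)}(W) − L_{Z(S)}(W))² − log √n − ı(W,S|Z̃))] ≤ 1, where ı(W,S|Z̃) = log(dP_{WZ̃S}/d(Q_{W|Z̃}P_{Z̃}P_S)). -/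
open MeasureTheory ProbabilityTheory Real

noncomputable section

lemma integrable_exp_lin_quad (a : ℝ) :
    Integrable (fun t : ℝ => Real.exp (a * t - t ^ 2 / 2)) := by
  have h : (fun t : ℝ => Real.exp (a * t - t ^ 2 / 2))
      = fun t => Real.exp (a ^ 2 / 2) * Real.exp (-(2⁻¹ : ℝ) * (t - a) ^ 2) := by
    funext t; rw [← Real.exp_add]; congr 1; ring
  rw [h]
  exact ((integrable_exp_neg_mul_sq (by norm_num : (0:ℝ) < 2⁻¹)).comp_sub_right a).const_mul _

lemma integral_exp_lin_quad (a : ℝ) :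
    ∫ t : ℝ, Real.exp (a * t - t ^ 2 / 2) = Real.sqrt (2 * π) * Real.exp (a ^ 2 / 2) := by
  have h : (fun t : ℝ => Real.exp (a * t - t ^ 2 / 2))
      = fun t => Real.exp (a ^ 2 / 2) * Real.exp (-(2⁻¹ : ℝ) * (t - a) ^ 2) := by
    funext t; rw [← Real.exp_add]; congr 1; ring
  have htr : ∫ t : ℝ, Real.exp (-(2⁻¹ : ℝ) * (t - a) ^ 2)
      = ∫ t : ℝ, Real.exp (-(2⁻¹ : ℝ) * t ^ 2) := by
    have h2 := integral_add_right_eq_self (μ := volume)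
      (fun t : ℝ => Real.exp (-(2⁻¹ : ℝ) * t ^ 2)) (-a)
    rw [← h2]
    simp only [sub_eq_add_neg]
  rw [h, integral_const_mul, htr, integral_gaussian]
  have h3 : Real.sqrt (π / 2⁻¹) = Real.sqrt (2 * π) := by
    norm_num [mul_comm]
  rw [h3]; ring

lemma sum_prod_exp_le (n : ℕ) (d : Fin n → ℝ) (hd : ∀ i, |d i| ≤ 1) (u : ℝ) :
    ∑ s : Fin n → Bool, ((2:ℝ) ^ n)⁻¹
        * Real.exp (u * ∑ i, (if s i then (1:ℝ) else -1) * d i)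
      ≤ Real.exp (n * u ^ 2 / 2) := by
  have hsum : ∑ s : Fin n → Bool, ((2:ℝ) ^ n)⁻¹
        * Real.exp (u * ∑ i, (if s i then (1:ℝ) else -1) * d i)
      = ∏ i, ∑ b : Bool, (2:ℝ)⁻¹ * Real.exp (u * ((if b then (1:ℝ) else -1) * d i)) := by
    rw [Finset.prod_univ_sum]
    rw [Fintype.piFinset_univ]
    congr 1 with s
    rw [Finset.prod_mul_distrib, Finset.prod_const, ← Real.exp_sum, ← Finset.mul_sum]
    congr 1
    · simp [inv_pow]
  rw [hsum]
  have hfac : ∀ i : Fin n,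
      ∑ b : Bool, (2:ℝ)⁻¹ * Real.exp (u * ((if b then (1:ℝ) else -1) * d i))
        ≤ Real.exp (u ^ 2 / 2) := by
    intro i
    have : ∑ b : Bool, (2:ℝ)⁻¹ * Real.exp (u * ((if b then (1:ℝ) else -1) * d i))
        = Real.cosh (u * d i) := by
      rw [Real.cosh_eq]
      simp [Fintype.sum_bool]
      ring_nf
    rw [this]
    refine le_trans (Real.cosh_le_exp_half_sq _) (Real.exp_le_exp.2 ?_)
    have h1 : (u * d i) ^ 2 ≤ u ^ 2 := by
      have := hd i
      have h2 : d i ^ 2 ≤ 1 := by nlinarith [abs_nonneg (d i), sq_abs (d i)]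
      nlinarith [sq_nonneg u]
    linarith
  calc ∏ i, ∑ b : Bool, (2:ℝ)⁻¹ * Real.exp (u * ((if b then (1:ℝ) else -1) * d i))
      ≤ ∏ _i : Fin n, Real.exp (u ^ 2 / 2) := by
        refine Finset.prod_le_prod (fun i _ => ?_) (fun i _ => hfac i)
        positivity
    _ = Real.exp (n * u ^ 2 / 2) := by
        rw [Finset.prod_const, ← Real.exp_nat_mul]
        congr 1
        simp [Finset.card_univ]
        ring


lemma keySum (n : ℕ) (hn : 1 ≤ n) (d : Fin n → ℝ) (hd : ∀ i, |d i| ≤ 1) :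
    ∑ s : Fin n → Bool, ((2:ℝ) ^ n)⁻¹
        * Real.exp (((n:ℝ) - 1) / 2 * ((∑ i, (if s i then (1:ℝ) else -1) * d i) / n) ^ 2)
      ≤ Real.sqrt n := by
  set N : ℝ := (n : ℝ) with hN
  have hN1 : 1 ≤ N := by rw [hN]; exact_mod_cast hn
  have hNpos : 0 < N := by linarith
  set c : ℝ := (N - 1) / (2 * N ^ 2) with hc
  have hc0 : 0 ≤ c := by
    apply div_nonneg <;> nlinarith
  set X : (Fin n → Bool) → ℝ := fun s => ∑ i, (if s i then (1:ℝ) else -1) * d i with hX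
  have hsqrt2pi : (0:ℝ) < Real.sqrt (2 * π) := Real.sqrt_pos.2 (by positivity)
  have hrep : ∀ s : Fin n → Bool,
      Real.exp ((N - 1) / 2 * (X s / N) ^ 2)
        = (Real.sqrt (2 * π))⁻¹
          * ∫ t : ℝ, Real.exp ((Real.sqrt (2 * c) * X s) * t - t ^ 2 / 2) := by
    intro s
    rw [integral_exp_lin_quad, ← mul_assoc, inv_mul_cancel₀ hsqrt2pi.ne', one_mul]
    congr 1
    have hsq : (Real.sqrt (2 * c) * X s) ^ 2 = 2 * c * X s ^ 2 := by
      rw [mul_pow, Real.sq_sqrt (by linarith)]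
    rw [hsq, hc]
    field_simp
  -- rewrite the sum
  have hstep : ∑ s : Fin n → Bool, ((2:ℝ) ^ n)⁻¹ * Real.exp ((N - 1) / 2 * (X s / N) ^ 2)
      = (Real.sqrt (2 * π))⁻¹ * ∫ t : ℝ, ∑ s : Fin n → Bool,
          ((2:ℝ) ^ n)⁻¹ * Real.exp ((Real.sqrt (2 * c) * X s) * t - t ^ 2 / 2) := by
    rw [integral_finset_sum _ (fun s _ => (integrable_exp_lin_quad _).const_mul _)]
    rw [Finset.mul_sum]
    congr 1 with s
    rw [hrep s, integral_const_mul]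
    ring
  have hpt : ∀ t : ℝ, ∑ s : Fin n → Bool,
        ((2:ℝ) ^ n)⁻¹ * Real.exp ((Real.sqrt (2 * c) * X s) * t - t ^ 2 / 2)
      ≤ Real.exp (-(2 * N)⁻¹ * t ^ 2) := by
    intro t
    have h1 : ∀ s : Fin n → Bool,
        Real.exp ((Real.sqrt (2 * c) * X s) * t - t ^ 2 / 2)
          = Real.exp ((Real.sqrt (2 * c) * t) * X s) * Real.exp (-(t ^ 2 / 2)) := by
      intro s
      rw [← Real.exp_add]
      congr 1
      ring
    simp only [h1]
    have h2 : ∑ s : Fin n → Bool,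
          ((2:ℝ) ^ n)⁻¹ * (Real.exp ((Real.sqrt (2 * c) * t) * X s) * Real.exp (-(t ^ 2 / 2)))
        = (∑ s : Fin n → Bool,
            ((2:ℝ) ^ n)⁻¹ * Real.exp ((Real.sqrt (2 * c) * t) * X s)) * Real.exp (-(t ^ 2 / 2)) := by
      rw [Finset.sum_mul]
      congr 1 with s
      ring
    rw [h2]
    have h3 := sum_prod_exp_le n d hd (Real.sqrt (2 * c) * t)
    have h4 : (∑ s : Fin n → Bool,
          ((2:ℝ) ^ n)⁻¹ * Real.exp ((Real.sqrt (2 * c) * t) * X s)) * Real.exp (-(t ^ 2 / 2))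
        ≤ Real.exp (N * (Real.sqrt (2 * c) * t) ^ 2 / 2) * Real.exp (-(t ^ 2 / 2)) :=
      mul_le_mul_of_nonneg_right h3 (Real.exp_nonneg _)
    refine h4.trans (le_of_eq ?_)
    rw [← Real.exp_add]
    congr 1
    have hsq : (Real.sqrt (2 * c) * t) ^ 2 = 2 * c * t ^ 2 := by
      rw [mul_pow, Real.sq_sqrt (by linarith)]
    rw [hsq, hc]
    field_simp
    ring
  have hint2 : Integrable (fun t : ℝ => Real.exp (-(2 * N)⁻¹ * t ^ 2)) :=
    integrable_exp_neg_mul_sq (by positivity)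
  have hmono : ∫ t : ℝ, ∑ s : Fin n → Bool,
        ((2:ℝ) ^ n)⁻¹ * Real.exp ((Real.sqrt (2 * c) * X s) * t - t ^ 2 / 2)
      ≤ ∫ t : ℝ, Real.exp (-(2 * N)⁻¹ * t ^ 2) := by
    refine integral_mono_of_nonneg (Filter.Eventually.of_forall fun t => ?_) hint2
      (Filter.Eventually.of_forall hpt)
    exact Finset.sum_nonneg fun s _ => by positivity
  have hgauss : ∫ t : ℝ, Real.exp (-(2 * N)⁻¹ * t ^ 2)
      = Real.sqrt (2 * π) * Real.sqrt N := by
    rw [integral_gaussian, ← Real.sqrt_mul (by positivity)]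
    congr 1
    field_simp
  calc ∑ s : Fin n → Bool, ((2:ℝ) ^ n)⁻¹ * Real.exp ((N - 1) / 2 * (X s / N) ^ 2)
      = (Real.sqrt (2 * π))⁻¹ * ∫ t : ℝ, ∑ s : Fin n → Bool,
          ((2:ℝ) ^ n)⁻¹ * Real.exp ((Real.sqrt (2 * c) * X s) * t - t ^ 2 / 2) := hstep
    _ ≤ (Real.sqrt (2 * π))⁻¹ * (Real.sqrt (2 * π) * Real.sqrt N) := by
        rw [← hgauss]
        exact mul_le_mul_of_nonneg_left hmono (by positivity)
    _ = Real.sqrt N := by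
        rw [← mul_assoc, inv_mul_cancel₀ hsqrt2pi.ne', one_mul]

lemma bind_eq_compProd {α β : Type*} [MeasurableSpace α] [MeasurableSpace β]
    (μ : Measure α) [SFinite μ] (κ : Kernel α β) [IsSFiniteKernel κ] :
    (μ.bind fun a => (κ a).map fun b => (a, b)) = μ.compProd κ := by
  have hfun : (fun a => (κ a).map fun b => (a, b)) = fun a => (Kernel.id ×ₖ κ) a := by
    funext a
    rw [Kernel.prod_apply, Kernel.id_apply, Measure.dirac_prod]
  ext s hs
  rw [hfun, Measure.bind_apply hs (Kernel.id ×ₖ κ).measurable.aemeasurable,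
    Measure.compProd_apply hs]
  refine lintegral_congr fun a => ?_
  rw [Kernel.prod_apply, Kernel.id_apply, Measure.dirac_prod,
    Measure.map_apply measurable_prodMk_left hs]

lemma coin_integral' {n : ℕ} (f : (Fin n → Bool) → ℝ) :
    ∫ s, f s ∂(Measure.pi fun _ : Fin n => (PMF.uniformOfFintype Bool).toMeasure)
      = ∑ s : Fin n → Bool, ((2:ℝ) ^ n)⁻¹ * f s := by
  rw [integral_fintype Integrable.of_finite]
  refine Finset.sum_congr rfl fun s _ => ?_
  have h1 : ({s} : Set (Fin n → Bool)) = Set.pi Set.univ fun i => {s i} :=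
    (Set.univ_pi_singleton s).symm
  have h2 : (Measure.pi fun _ : Fin n => (PMF.uniformOfFintype Bool).toMeasure) {s}
      = ((2 : ENNReal) ^ n)⁻¹ := by
    rw [h1, Measure.pi_pi]
    have hcoin : ∀ b : Bool, (PMF.uniformOfFintype Bool).toMeasure {b} = 2⁻¹ := by
      intro b
      rw [PMF.toMeasure_apply_singleton _ _ (measurableSet_singleton b),
        PMF.uniformOfFintype_apply]
      norm_num
    simp [hcoin, ← ENNReal.inv_pow]
  rw [measureReal_def, h2, smul_eq_mul]
  congr 1
  rw [ENNReal.toReal_inv]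
  norm_num


lemma coin_integral {n : ℕ} (f : (Fin n → Bool) → ℝ) :
    ∫ s, f s ∂(Measure.pi fun _ : Fin n => coin)
      = ∑ s : Fin n → Bool, ((2:ℝ) ^ n)⁻¹ * f s :=
  coin_integral' f

/-- eq. (31): slow-rate exponential inequality. -/
theorem stmt16
    {Z W : Type*} [MeasurableSpace Z] [MeasurableSpace W]
    (n : ℕ) (hn : 0 < n)
    (PZ : Measure Z) [IsProbabilityMeasure PZ]
    (loss : W → Z → ℝ) (hlossmeas : Measurable (Function.uncurry loss))
    (hloss : ∀ w z, loss w z ∈ Set.Icc (0:ℝ) 1)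
    (K : Kernel ((Fin n × Bool → Z) × (Fin n → Bool)) W) [IsMarkovKernel K]
    (hK : ∀ zt s zt' s', (∀ i, zt (i, s i) = zt' (i, s' i)) → K (zt, s) = K (zt', s'))
    (PZt : Measure ((Fin n × Bool) → Z)) (hPZt : PZt = Measure.pi fun _ => PZ)
    (PS : Measure (Fin n → Bool)) (hPS : PS = Measure.pi fun _ => coin)
    (PWZS : Measure (((Fin n × Bool → Z) × (Fin n → Bool)) × W))
    (hPWZS : PWZS = (PZt.prod PS).bind fun p => (K p).map fun w => (p, w))
    (Q : Kernel (Fin n × Bool → Z) W) [IsMarkovKernel Q]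
    (QJ : Measure (((Fin n × Bool → Z) × (Fin n → Bool)) × W))
    (hQJ : QJ = (PZt.prod PS).bind fun p => (Q p.1).map fun w => (p, w))
    (hn2 : 2 ≤ n)
    (hac1 : PWZS ≪ QJ) (hac2 : QJ ≪ PWZS) :
    ∫ x, Real.exp (((n - 1 : ℝ)/2) * (testLoss n loss x - trainLoss n loss x) ^ 2
        - Real.log (Real.sqrt n) - Real.log ((PWZS.rnDeriv QJ x).toReal)) ∂PWZS ≤ 1 := by
  -- basic instances
  haveI hPZtP : IsProbabilityMeasure PZt := by rw [hPZt]; infer_instance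
  haveI hPSP : IsProbabilityMeasure PS := by rw [hPS]; infer_instance
  set κQ : Kernel ((Fin n × Bool → Z) × (Fin n → Bool)) W :=
    Q.comap Prod.fst measurable_fst with hκQ
  have hQJ' : QJ = (PZt.prod PS).compProd κQ := by
    rw [hQJ, show (fun p : (Fin n × Bool → Z) × (Fin n → Bool) =>
        (Q p.1).map fun w => (p, w)) = fun p => (κQ p).map fun w => (p, w) from by
      funext p; rw [hκQ, Kernel.comap_apply], bind_eq_compProd]
  have hPWZS' : PWZS = (PZt.prod PS).compProd K := by rw [hPWZS, bind_eq_compProd]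
  haveI : IsProbabilityMeasure PWZS := by rw [hPWZS']; infer_instance
  haveI : IsProbabilityMeasure QJ := by rw [hQJ']; infer_instance
  -- abbreviations
  have hnr1 : 1 ≤ (n : ℝ) := by exact_mod_cast hn
  have hsqrtn : (1:ℝ) ≤ Real.sqrt (n:ℝ) := by
    rw [show (1:ℝ) = Real.sqrt 1 from (Real.sqrt_one).symm]
    exact Real.sqrt_le_sqrt hnr1
  have hsqrtnpos : (0:ℝ) < Real.sqrt (n:ℝ) := lt_of_lt_of_le one_pos hsqrtn
  set e : (((Fin n × Bool → Z) × (Fin n → Bool)) × W) → ℝ :=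
    fun x => Real.exp (((n:ℝ) - 1)/2 * (testLoss n loss x - trainLoss n loss x) ^ 2
      - Real.log (Real.sqrt (n:ℝ))) with he
  -- measurability
  have hmeval : ∀ (i : Fin n) (b : Bool),
      Measurable fun x : ((Fin n × Bool → Z) × (Fin n → Bool)) × W => x.1.1 (i, b) :=
    fun i b => (measurable_pi_apply (i, b)).comp (measurable_fst.comp measurable_fst)
  have hsindex : ∀ i : Fin n,
      MeasurableSet {x : ((Fin n × Bool → Z) × (Fin n → Bool)) × W | x.1.2 i = true} := by
    intro i
    have hm : Measurable fun x : ((Fin n × Bool → Z) × (Fin n → Bool)) × W => x.1.2 i :=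
      (measurable_pi_apply i).comp (measurable_snd.comp measurable_fst)
    exact hm (measurableSet_singleton true)
  have hsel : ∀ i : Fin n, Measurable
      fun x : ((Fin n × Bool → Z) × (Fin n → Bool)) × W => x.1.1 (i, x.1.2 i) := by
    intro i
    have hre : (fun x : ((Fin n × Bool → Z) × (Fin n → Bool)) × W => x.1.1 (i, x.1.2 i))
        = fun x => if x.1.2 i = true then x.1.1 (i, true) else x.1.1 (i, false) := by
      funext x; cases h : x.1.2 i <;> simp [h]
    rw [hre]
    exact Measurable.ite (hsindex i) (hmeval i true) (hmeval i false)
  have hsel' : ∀ i : Fin n, Measurable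
      fun x : ((Fin n × Bool → Z) × (Fin n → Bool)) × W => x.1.1 (i, !x.1.2 i) := by
    intro i
    have hre : (fun x : ((Fin n × Bool → Z) × (Fin n → Bool)) × W => x.1.1 (i, !x.1.2 i))
        = fun x => if x.1.2 i = true then x.1.1 (i, false) else x.1.1 (i, true) := by
      funext x; cases h : x.1.2 i <;> simp [h]
    rw [hre]
    exact Measurable.ite (hsindex i) (hmeval i false) (hmeval i true)
  have htrainm : Measurable (trainLoss n loss :
      (((Fin n × Bool → Z) × (Fin n → Bool)) × W) → ℝ) := by
    unfold trainLoss
    exact (Finset.measurable_sum _ fun i _ =>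
      hlossmeas.comp (measurable_snd.prodMk (hsel i))).div_const _
  have htestm : Measurable (testLoss n loss :
      (((Fin n × Bool → Z) × (Fin n → Bool)) × W) → ℝ) := by
    unfold testLoss
    exact (Finset.measurable_sum _ fun i _ =>
      hlossmeas.comp (measurable_snd.prodMk (hsel' i))).div_const _
  have hem : Measurable e := by
    rw [he]
    exact ((((htestm.sub htrainm).pow_const 2).const_mul _).sub_const _).exp
  -- bounds on losses
  have htr01 : ∀ x, trainLoss n loss x ∈ Set.Icc (0:ℝ) 1 := by
    intro x
    unfold trainLoss
    constructor
    · exact div_nonneg (Finset.sum_nonneg fun i _ => (hloss _ _).1) (Nat.cast_nonneg n)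
    · rw [div_le_one (by exact_mod_cast hn : (0:ℝ) < n)]
      calc ∑ i, loss x.2 (x.1.1 (i, x.1.2 i)) ≤ ∑ _i : Fin n, (1:ℝ) :=
            Finset.sum_le_sum fun i _ => (hloss _ _).2
        _ = n := by simp
  have hte01 : ∀ x, testLoss n loss x ∈ Set.Icc (0:ℝ) 1 := by
    intro x
    unfold testLoss
    constructor
    · exact div_nonneg (Finset.sum_nonneg fun i _ => (hloss _ _).1) (Nat.cast_nonneg n)
    · rw [div_le_one (by exact_mod_cast hn : (0:ℝ) < n)]
      calc ∑ i, loss x.2 (x.1.1 (i, !x.1.2 i)) ≤ ∑ _i : Fin n, (1:ℝ) :=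
            Finset.sum_le_sum fun i _ => (hloss _ _).2
        _ = n := by simp
  set C : ℝ := Real.exp (((n:ℝ) - 1)/2) with hC
  have hebound : ∀ x, e x ≤ C := by
    intro x
    rw [he, hC]
    apply Real.exp_le_exp.2
    have h1 : (testLoss n loss x - trainLoss n loss x) ^ 2 ≤ 1 := by
      have := htr01 x; have := hte01 x
      simp only [Set.mem_Icc] at *
      nlinarith
    have h2 : (0:ℝ) ≤ ((n:ℝ) - 1)/2 := by linarith
    have h3 : (0:ℝ) ≤ Real.log (Real.sqrt (n:ℝ)) := Real.log_nonneg hsqrtn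
    nlinarith
  have henonneg : ∀ x, 0 ≤ e x := fun x => Real.exp_nonneg _
  -- integrability of e with respect to any probability measure
  have heint : ∀ (ν : Measure (((Fin n × Bool → Z) × (Fin n → Bool)) × W))
      [IsProbabilityMeasure ν], Integrable e ν := by
    intro ν _
    refine Integrable.mono' (integrable_const C) hem.aestronglyMeasurable
      (Filter.Eventually.of_forall fun x => ?_)
    rw [Real.norm_eq_abs, abs_of_nonneg (henonneg x)]
    exact hebound x
  -- Step 1: change of measure
  have hCM : ∫ x, Real.exp (((n - 1 : ℝ)/2) * (testLoss n loss x - trainLoss n loss x) ^ 2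
        - Real.log (Real.sqrt n) - Real.log ((PWZS.rnDeriv QJ x).toReal)) ∂PWZS
      = ∫ x, e x ∂QJ := by
    rw [← MeasureTheory.integral_rnDeriv_smul hac2 (f := e)]
    refine integral_congr_ae ?_
    filter_upwards [Measure.rnDeriv_pos hac1, hac1.ae_le (Measure.rnDeriv_lt_top PWZS QJ),
      Measure.inv_rnDeriv hac1] with x h0 hlt hinv
    have htR : 0 < ((PWZS.rnDeriv QJ) x).toReal := ENNReal.toReal_pos h0.ne' hlt.ne
    rw [Real.exp_sub, Real.exp_log htR, smul_eq_mul]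
    have hinv' : (((PWZS.rnDeriv QJ) x)⁻¹ : ENNReal) = (QJ.rnDeriv PWZS) x := by
      rw [← Pi.inv_apply]; exact hinv
    rw [div_eq_mul_inv, ← ENNReal.toReal_inv, hinv', mul_comm]
  -- slice integrability
  have hslice : ∀ p : (Fin n × Bool → Z) × (Fin n → Bool),
      Integrable (fun w => e (p, w)) (Q p.1) := by
    intro p
    refine Integrable.mono' (integrable_const C)
      ((hem.comp measurable_prodMk_left).aestronglyMeasurable)
      (Filter.Eventually.of_forall fun w => ?_)
    rw [Real.norm_eq_abs, abs_of_nonneg (henonneg _)]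
    exact hebound _
  -- Step 2: disintegration of QJ
  set F : (Fin n × Bool → Z) × (Fin n → Bool) → ℝ :=
    fun p => ∫ w, e (p, w) ∂(Q p.1) with hF
  have h2 : ∫ x, e x ∂QJ = ∫ p, F p ∂(PZt.prod PS) := by
    rw [hQJ', Measure.integral_compProd (hQJ' ▸ heint QJ)]
    refine integral_congr_ae (Filter.Eventually.of_forall fun p => ?_)
    rw [hF]
    simp only [hκQ, Kernel.comap_apply]
  -- F is bounded and measurable
  have hFmeas : StronglyMeasurable F := by
    have h := (hem.stronglyMeasurable).integral_kernel_prod_right' (κ := κQ)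
    have : F = fun p => ∫ w, e (p, w) ∂(κQ p) := by
      funext p; rw [hF]; simp only [hκQ, Kernel.comap_apply]
    rw [this]
    exact h
  have hFnonneg : ∀ p, 0 ≤ F p := fun p => integral_nonneg fun w => henonneg _
  have hFbound : ∀ p, F p ≤ C := by
    intro p
    calc F p ≤ ∫ _w, C ∂(Q p.1) := integral_mono (hslice p) (integrable_const C)
          fun w => hebound _
      _ = C := by simp
  have hFint : Integrable F (PZt.prod PS) := by
    refine Integrable.mono' (integrable_const C) hFmeas.aestronglyMeasurable
      (Filter.Eventually.of_forall fun p => ?_)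
    rw [Real.norm_eq_abs, abs_of_nonneg (hFnonneg p)]
    exact hFbound p
  have h3 : ∫ p, F p ∂(PZt.prod PS) = ∫ zt, ∫ s, F (zt, s) ∂PS ∂PZt :=
    integral_prod F hFint
  -- Step 3: for each zt, the inner PS-average of F is at most 1
  have h4 : ∀ zt : Fin n × Bool → Z, ∫ s, F (zt, s) ∂PS ≤ 1 := by
    intro zt
    rw [hPS, coin_integral]
    -- key pointwise bound
    have hptw : ∀ w : W, ∑ s : Fin n → Bool, ((2:ℝ) ^ n)⁻¹ * e ((zt, s), w) ≤ 1 := by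
      intro w
      set d : Fin n → ℝ := fun i => loss w (zt (i, false)) - loss w (zt (i, true)) with hd
      have hd1 : ∀ i, |d i| ≤ 1 := by
        intro i
        rw [hd, abs_le]
        constructor
        · have h1 := (hloss w (zt (i, false))).1
          have h2 := (hloss w (zt (i, true))).2
          simp only
          linarith
        · have h1 := (hloss w (zt (i, false))).2
          have h2 := (hloss w (zt (i, true))).1
          simp only
          linarith
      have hΔeq : ∀ s : Fin n → Bool,
          testLoss n loss ((zt, s), w) - trainLoss n loss ((zt, s), w)
            = (∑ i, (if s i then (1:ℝ) else -1) * d i) / n := by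
        intro s
        unfold testLoss trainLoss
        rw [div_sub_div_same]
        congr 1
        rw [← Finset.sum_sub_distrib]
        refine Finset.sum_congr rfl fun i _ => ?_
        cases h : s i <;> simp [h, hd]
      have hee : ∀ s : Fin n → Bool, e ((zt, s), w)
          = Real.exp (((n:ℝ) - 1) / 2
              * ((∑ i, (if s i then (1:ℝ) else -1) * d i) / n) ^ 2) / Real.sqrt (n:ℝ) := by
        intro s
        rw [he]
        simp only
        rw [hΔeq s, Real.exp_sub, Real.exp_log hsqrtnpos]
      calc ∑ s : Fin n → Bool, ((2:ℝ) ^ n)⁻¹ * e ((zt, s), w)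
          = (∑ s : Fin n → Bool, ((2:ℝ) ^ n)⁻¹
              * Real.exp (((n:ℝ) - 1) / 2
                * ((∑ i, (if s i then (1:ℝ) else -1) * d i) / n) ^ 2)) / Real.sqrt (n:ℝ) := by
            rw [Finset.sum_div]
            refine Finset.sum_congr rfl fun s _ => ?_
            rw [hee s]
            ring
        _ ≤ Real.sqrt (n:ℝ) / Real.sqrt (n:ℝ) := by
            exact (div_le_div_iff_of_pos_right hsqrtnpos).2 (keySum n hn d hd1)
        _ = 1 := div_self hsqrtnpos.ne'
    -- swap finite sum and Q-integral
    have hswap : ∑ s : Fin n → Bool, ((2:ℝ) ^ n)⁻¹ * F (zt, s)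
        = ∫ w, ∑ s : Fin n → Bool, ((2:ℝ) ^ n)⁻¹ * e ((zt, s), w) ∂(Q zt) := by
      rw [integral_finset_sum _ fun s _ => (hslice ((zt, s))).const_mul _]
      refine Finset.sum_congr rfl fun s _ => ?_
      rw [hF]
      simp only
      rw [integral_const_mul]
    rw [hswap]
    calc ∫ w, ∑ s : Fin n → Bool, ((2:ℝ) ^ n)⁻¹ * e ((zt, s), w) ∂(Q zt)
        ≤ ∫ _w, (1:ℝ) ∂(Q zt) := by
          refine integral_mono (integrable_finset_sum _ fun s _ =>
            (hslice ((zt, s))).const_mul _) (integrable_const 1) hptw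
      _ = 1 := by simp
  -- assemble
  rw [hCM, h2, h3]
  calc ∫ zt, ∫ s, F (zt, s) ∂PS ∂PZt ≤ ∫ _zt, (1:ℝ) ∂PZt := by
        refine integral_mono (hFint.integral_prod_left) (integrable_const 1) h4
    _ = 1 := by simp
end
end

section
/- (Slow-rate single-draw bound, eq. (4)) In the random-subset setting with n ≥ 2, let δ ∈ (0,1), let P_{W|Z̃} be the marginalization of P_S P_{W|Z̃S} over S, and assume P_{WZ̃S} is mutually absolutely continuous with P_{W|Z̃}P_{Z̃}P_S. Then with probability at least 1 − δ over (W, Z̃, S) ~ P_{WZ̃S}: L_{Z(S̄)}(W) ≤ L_{Z(S)}(W) + √( (2/(n−1)) · ( ı(W,S|Z̃) + log(√n/δ) ) ), where ı(W,S|Z̃) = log(dP_{WZ̃S}/d(P_{W|Z̃}P_{Z̃}P_S)). -/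
open MeasureTheory ProbabilityTheory Real

noncomputable section

open scoped ENNReal NNReal

section Plumbing

variable {A B : Type*} [MeasurableSpace A] [MeasurableSpace B]

def Jker (κ : Kernel A B) [IsSFiniteKernel κ] : Kernel A (A × B) :=
  (Kernel.deterministic id measurable_id) ×ₖ κ

lemma Jker_apply (κ : Kernel A B) [IsSFiniteKernel κ] (p : A) :
    Jker κ p = (κ p).map fun w => (p, w) := by
  rw [Jker, Kernel.prod_apply, Kernel.deterministic_apply, Measure.dirac_prod]
  rfl

instance (κ : Kernel A B) [IsMarkovKernel κ] : IsMarkovKernel (Jker κ) := by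
  rw [Jker]; infer_instance

lemma bind_J_lintegral (m : Measure A) (κ : Kernel A B) [IsMarkovKernel κ]
    {f : A × B → ℝ≥0∞} (hf : Measurable f) :
    ∫⁻ x, f x ∂(m.bind fun p => (κ p).map fun w => (p, w))
      = ∫⁻ p, ∫⁻ w, f (p, w) ∂(κ p) ∂m := by
  have h : (fun p => (κ p).map fun w => (p, w)) = fun p => Jker κ p := by
    funext p; rw [Jker_apply]
  rw [h, Measure.lintegral_bind (Jker κ).measurable.aemeasurable hf.aemeasurable]
  refine lintegral_congr fun p => ?_
  rw [Jker_apply, lintegral_map hf measurable_prodMk_left]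

lemma isProb_bind_J (m : Measure A) [IsProbabilityMeasure m] (κ : Kernel A B)
    [IsMarkovKernel κ] :
    IsProbabilityMeasure (m.bind fun p => (κ p).map fun w => (p, w)) := by
  constructor
  have h : (fun p => (κ p).map fun w => (p, w)) = fun p => Jker κ p := by
    funext p; rw [Jker_apply]
  rw [h, Measure.bind_apply MeasurableSet.univ (Jker κ).measurable.aemeasurable]
  simp

lemma isProb_bind_J2 {C : Type*} [MeasurableSpace C] (m : Measure (A × C))
    [IsProbabilityMeasure m] (κ : Kernel A B) [IsMarkovKernel κ] :
    IsProbabilityMeasure (m.bind fun p => (κ p.1).map fun w => (p, w)) := by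
  have hfun : (fun p : A × C => (κ p.1).map fun w => (p, w))
      = fun p => ((κ.comap Prod.fst measurable_fst : Kernel (A × C) B) p).map
          fun w => (p, w) := by
    funext p; rw [Kernel.comap_apply]
  rw [hfun]
  exact isProb_bind_J _ (κ.comap Prod.fst measurable_fst : Kernel (A × C) B)

end Plumbing

section Meas

variable {Z W : Type*} [MeasurableSpace Z] [MeasurableSpace W] (n : ℕ)
  (loss : W → Z → ℝ)

lemma measurable_term (hlossmeas : Measurable (Function.uncurry loss)) (i : Fin n) (b : Bool) :
    Measurable (fun x : ((Fin n × Bool → Z) × (Fin n → Bool)) × W =>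
      loss x.2 (x.1.1 (i, b))) := by
  have : (fun x : ((Fin n × Bool → Z) × (Fin n → Bool)) × W => loss x.2 (x.1.1 (i, b)))
      = fun x => Function.uncurry loss (x.2, x.1.1 (i, b)) := rfl
  rw [this]
  exact hlossmeas.comp (measurable_snd.prodMk
    ((measurable_pi_apply (i, b)).comp (measurable_fst.comp measurable_fst)))

lemma measurable_trainLoss (hlossmeas : Measurable (Function.uncurry loss)) : Measurable (trainLoss n loss) := by
  unfold trainLoss
  refine Measurable.div_const (Finset.measurable_sum _ fun i _ => ?_) _
  have : (fun x : ((Fin n × Bool → Z) × (Fin n → Bool)) × W => loss x.2 (x.1.1 (i, x.1.2 i)))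
      = fun x => if x.1.2 i then loss x.2 (x.1.1 (i, true)) else loss x.2 (x.1.1 (i, false)) := by
    funext x; cases h : x.1.2 i <;> simp [h]
  rw [this]
  have hm : Measurable fun x : ((Fin n × Bool → Z) × (Fin n → Bool)) × W => x.1.2 i :=
    (measurable_pi_apply i).comp (measurable_snd.comp measurable_fst)
  exact Measurable.ite (hm (measurableSet_singleton true))
    (measurable_term n loss hlossmeas i true) (measurable_term n loss hlossmeas i false)

lemma measurable_testLoss (hlossmeas : Measurable (Function.uncurry loss)) : Measurable (testLoss n loss) := by
  unfold testLoss
  refine Measurable.div_const (Finset.measurable_sum _ fun i _ => ?_) _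
  have : (fun x : ((Fin n × Bool → Z) × (Fin n → Bool)) × W => loss x.2 (x.1.1 (i, !x.1.2 i)))
      = fun x => if x.1.2 i then loss x.2 (x.1.1 (i, false)) else loss x.2 (x.1.1 (i, true)) := by
    funext x; cases h : x.1.2 i <;> simp [h]
  rw [this]
  have hm : Measurable fun x : ((Fin n × Bool → Z) × (Fin n → Bool)) × W => x.1.2 i :=
    (measurable_pi_apply i).comp (measurable_snd.comp measurable_fst)
  exact Measurable.ite (hm (measurableSet_singleton true))
    (measurable_term n loss hlossmeas i false) (measurable_term n loss hlossmeas i true)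

end Meas

section Analytic

lemma coin_integral_s18 (f : Bool → ℝ) : ∫ b, f b ∂coin = (f true + f false) / 2 := by
  rw [coin, PMF.integral_eq_sum]
  simp [PMF.uniformOfFintype_apply, Fintype.card_bool, ENNReal.toReal_inv]
  ring

instance : MeasureSpace Bool := ⟨coin⟩

lemma volume_bool : (volume : Measure Bool) = coin := rfl

instance : SigmaFinite (volume : Measure Bool) := by
  rw [volume_bool]; infer_instance

lemma coin_mgf (n : ℕ) (a : Fin n → ℝ) (ha : ∀ i, |a i| ≤ 1) (u : ℝ) :
    ∫ s, exp (u * ∑ i, (if s i then -a i else a i)) ∂(Measure.pi fun _ : Fin n => coin)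
      ≤ exp (n * u ^ 2 / 2) := by
  rw [show (Measure.pi fun _ : Fin n => coin) = (volume : Measure (Fin n → Bool)) from volume_pi.symm]
  have h : (fun s : Fin n → Bool => exp (u * ∑ i, (if s i then -a i else a i)))
      = fun s => ∏ i, exp (u * (if s i then -a i else a i)) := by
    funext s; rw [← Real.exp_sum, Finset.mul_sum]
  rw [h, volume_pi, integral_fintype_prod_eq_prod (ι := Fin n) (fun i (b : Bool) => exp (u * (if b then -a i else a i)))]
  calc ∏ i, ∫ b, exp (u * if b then -a i else a i) ∂coin
      = ∏ i, Real.cosh (u * a i) := by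
        refine Finset.prod_congr rfl fun i _ => ?_
        rw [coin_integral_s18, Real.cosh_eq]
        norm_num [mul_neg]
        ring
    _ ≤ ∏ _i : Fin n, exp (u ^ 2 / 2) := by
        refine Finset.prod_le_prod (fun i _ => (Real.cosh_pos _).le) (fun i _ => ?_)
        refine (Real.cosh_le_exp_half_sq _).trans (Real.exp_le_exp.2 ?_)
        have h2 : (a i) ^ 2 ≤ 1 := (sq_le_one_iff_abs_le_one _).2 (ha i)
        have := sq_nonneg u
        calc (u * a i) ^ 2 / 2 = u ^ 2 * (a i) ^ 2 / 2 := by ring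
          _ ≤ u ^ 2 * 1 / 2 := by nlinarith
          _ = u ^ 2 / 2 := by ring
    _ = exp (n * u ^ 2 / 2) := by
        rw [Finset.prod_const, Finset.card_univ, Fintype.card_fin, ← Real.exp_nat_mul]
        ring_nf

lemma integrable_gauss (u : ℝ) : Integrable (fun x : ℝ => exp (u * x - x ^ 2 / 2)) := by
  have h : (fun x : ℝ => exp (u * x - x ^ 2 / 2))
      = fun x : ℝ => exp (u ^ 2 / 2) * exp (-(1/2) * (x - u) ^ 2) := by
    funext x; rw [← Real.exp_add]; ring_nf
  rw [h]
  exact (Integrable.comp_sub_right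
    (integrable_exp_neg_mul_sq (by norm_num : (0:ℝ) < 1/2)) u).const_mul _

lemma integral_gauss_lin (u : ℝ) :
    ∫ x : ℝ, exp (u * x - x ^ 2 / 2) = Real.sqrt (2 * π) * exp (u ^ 2 / 2) := by
  have h : (fun x : ℝ => exp (u * x - x ^ 2 / 2))
      = fun x : ℝ => exp (u ^ 2 / 2) * exp (-(1/2) * (x - u) ^ 2) := by
    funext x; rw [← Real.exp_add]; ring_nf
  rw [h, integral_const_mul,
    integral_sub_right_eq_self (μ := volume) (fun x : ℝ => Real.exp (-(1/2) * x ^ 2)) u,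
    integral_gaussian, show π / (1/2 : ℝ) = 2 * π by ring]
  ring

lemma core (n : ℕ) (hn2 : 2 ≤ n) (a : Fin n → ℝ) (ha : ∀ i, |a i| ≤ 1) :
    ∫ s, exp (((n : ℝ) - 1) / 2 * ((∑ i, (if s i then -a i else a i)) / n) ^ 2)
      ∂(Measure.pi fun _ : Fin n => coin) ≤ Real.sqrt n := by
  have hn2' : (2:ℝ) ≤ n := by exact_mod_cast hn2
  have npos : (0:ℝ) < n := by linarith
  set PS : Measure (Fin n → Bool) := Measure.pi fun _ : Fin n => coin with hPS
  set c : ℝ := ((n : ℝ) - 1) / 2 with hc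
  have hc0 : 0 ≤ 2 * c := by rw [hc]; linarith
  set t : ℝ := Real.sqrt (2 * c) with htdef
  have ht2 : t ^ 2 = 2 * c := Real.sq_sqrt hc0
  have ht2' : t ^ 2 = (n:ℝ) - 1 := by rw [ht2, hc]; ring
  have sq2pi : (0:ℝ) < Real.sqrt (2 * π) := Real.sqrt_pos.2 (by positivity)
  have hpt : ∀ y : ℝ, exp (c * y ^ 2)
      = (Real.sqrt (2 * π))⁻¹ * ∫ x : ℝ, exp ((t * y) * x - x ^ 2 / 2) := by
    intro y
    rw [integral_gauss_lin, ← mul_assoc, inv_mul_cancel₀ sq2pi.ne', one_mul]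
    congr 1
    rw [mul_pow, ht2]; ring
  calc ∫ s, exp (c * ((∑ i, (if s i then -a i else a i)) / n) ^ 2) ∂PS
      = ∫ s, ((Real.sqrt (2 * π))⁻¹ *
          ∫ x : ℝ, exp ((t * ((∑ i, (if s i then -a i else a i)) / n)) * x - x ^ 2 / 2)) ∂PS :=
        integral_congr_ae (Filter.Eventually.of_forall fun s => hpt _)
    _ = (Real.sqrt (2 * π))⁻¹ * ∫ s, (∫ x : ℝ,
          exp ((t * ((∑ i, (if s i then -a i else a i)) / n)) * x - x ^ 2 / 2)) ∂PS :=
        integral_const_mul _ _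
    _ = (Real.sqrt (2 * π))⁻¹ * ∑ s : Fin n → Bool, (PS {s}).toReal * ∫ x : ℝ,
          exp ((t * ((∑ i, (if s i then -a i else a i)) / n)) * x - x ^ 2 / 2) := by
        rw [integral_fintype Integrable.of_finite]
        simp only [smul_eq_mul, Measure.real]
    _ = (Real.sqrt (2 * π))⁻¹ * ∫ x : ℝ, ∑ s : Fin n → Bool, (PS {s}).toReal *
          exp ((t * ((∑ i, (if s i then -a i else a i)) / n)) * x - x ^ 2 / 2) := by
        congr 1
        simp_rw [← integral_const_mul]
        rw [← integral_finset_sum _ fun s _ => (integrable_gauss _).const_mul _]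
    _ ≤ (Real.sqrt (2 * π))⁻¹ * ∫ x : ℝ, exp (-(1/(2*(n:ℝ))) * x ^ 2) := by
        refine mul_le_mul_of_nonneg_left ?_ (inv_nonneg.2 sq2pi.le)
        refine integral_mono (integrable_finset_sum _ fun s _ => (integrable_gauss _).const_mul _)
          (integrable_exp_neg_mul_sq (by positivity)) ?_
        intro x
        dsimp only
        have h1 : ∑ s : Fin n → Bool, (PS {s}).toReal *
              exp ((t * ((∑ i, (if s i then -a i else a i)) / n)) * x - x ^ 2 / 2)
            = ∫ s, exp ((t * ((∑ i, (if s i then -a i else a i)) / n)) * x - x ^ 2 / 2) ∂PS := by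
          rw [integral_fintype Integrable.of_finite]; simp only [smul_eq_mul, Measure.real]
        rw [h1]
        have h2 : ∀ s : Fin n → Bool,
            exp ((t * ((∑ i, (if s i then -a i else a i)) / n)) * x - x ^ 2 / 2)
            = exp (-(x ^ 2) / 2) * exp ((t * x / n) * ∑ i, (if s i then -a i else a i)) := by
          intro s; rw [← Real.exp_add]; congr 1; field_simp; ring
        rw [integral_congr_ae (Filter.Eventually.of_forall h2), integral_const_mul]
        calc exp (-(x ^ 2) / 2) * ∫ s, exp ((t * x / n) * ∑ i, (if s i then -a i else a i)) ∂PS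
            ≤ exp (-(x ^ 2) / 2) * exp (n * (t * x / n) ^ 2 / 2) :=
              mul_le_mul_of_nonneg_left (coin_mgf n a ha (t * x / n)) (Real.exp_nonneg _)
          _ = exp (-(1/(2*(n:ℝ))) * x ^ 2) := by
              rw [← Real.exp_add]
              congr 1
              have hne : (n:ℝ) ≠ 0 := ne_of_gt npos
              field_simp
              linear_combination (x ^ 2) * ht2'
    _ = Real.sqrt n := by
        rw [integral_gaussian]
        rw [show π / (1/(2*(n:ℝ))) = (2 * π) * n by field_simp]
        rw [Real.sqrt_mul (by positivity : (0:ℝ) ≤ 2 * π) (n:ℝ), ← mul_assoc,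
          inv_mul_cancel₀ sq2pi.ne', one_mul]


end Analytic

lemma expA {Z W : Type*} [MeasurableSpace Z] [MeasurableSpace W]
    (n : ℕ) (hn2 : 2 ≤ n)
    (PZt : Measure ((Fin n × Bool) → Z)) [IsProbabilityMeasure PZt]
    (loss : W → Z → ℝ) (hlossmeas : Measurable (Function.uncurry loss))
    (hloss : ∀ w z, loss w z ∈ Set.Icc (0:ℝ) 1)
    (M : Kernel (Fin n × Bool → Z) W) [IsMarkovKernel M] :
    ∫⁻ x, ENNReal.ofReal (Real.exp (((n : ℝ) - 1) / 2 *
        (testLoss n loss x - trainLoss n loss x) ^ 2))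
      ∂((PZt.prod (Measure.pi fun _ : Fin n => coin)).bind fun p => (M p.1).map fun w => (p, w))
      ≤ ENNReal.ofReal (Real.sqrt n) := by
  have mG0 : Measurable fun x : ((Fin n × Bool → Z) × (Fin n → Bool)) × W =>
      Real.exp (((n : ℝ) - 1) / 2 * (testLoss n loss x - trainLoss n loss x) ^ 2) :=
    (measurable_const.mul (((measurable_testLoss n loss hlossmeas).sub
      (measurable_trainLoss n loss hlossmeas)).pow_const 2)).exp
  have mG : Measurable fun x : ((Fin n × Bool → Z) × (Fin n → Bool)) × W =>
      ENNReal.ofReal (Real.exp (((n : ℝ) - 1) / 2 *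
        (testLoss n loss x - trainLoss n loss x) ^ 2)) := mG0.ennreal_ofReal
  set κ : Kernel ((Fin n × Bool → Z) × (Fin n → Bool)) W := M.comap Prod.fst measurable_fst
    with hκ
  have hfun : (fun p : (Fin n × Bool → Z) × (Fin n → Bool) => (M p.1).map fun w => (p, w))
      = fun p => (κ p).map fun w => (p, w) := by
    funext p; rw [hκ, Kernel.comap_apply]
  rw [hfun, bind_J_lintegral _ _ mG]
  rw [MeasureTheory.lintegral_prod _ (Measurable.lintegral_kernel_prod_right' mG).aemeasurable]
  have hinner : ∀ z : Fin n × Bool → Z, ∀ w : W,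
      ∫⁻ s, ENNReal.ofReal (Real.exp (((n : ℝ) - 1) / 2 *
          (testLoss n loss ((z, s), w) - trainLoss n loss ((z, s), w)) ^ 2))
        ∂(Measure.pi fun _ : Fin n => coin) ≤ ENNReal.ofReal (Real.sqrt n) := by
    intro z w
    set a : Fin n → ℝ := fun i => loss w (z (i, true)) - loss w (z (i, false)) with ha
    have hΔ : ∀ s : Fin n → Bool,
        testLoss n loss ((z, s), w) - trainLoss n loss ((z, s), w)
        = (∑ i, (if s i then -a i else a i)) / n := by
      intro s
      unfold testLoss trainLoss
      rw [div_sub_div_same, ← Finset.sum_sub_distrib]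
      congr 1
      refine Finset.sum_congr rfl fun i _ => ?_
      cases h : s i <;> simp [h, ha]
    simp_rw [hΔ]
    rw [← ofReal_integral_eq_lintegral_ofReal Integrable.of_finite
      (Filter.Eventually.of_forall fun s => Real.exp_nonneg _)]
    apply ENNReal.ofReal_le_ofReal
    refine core n hn2 a fun i => ?_
    have h1 := hloss w (z (i, true))
    have h2 := hloss w (z (i, false))
    rw [Set.mem_Icc] at h1 h2
    simp only [ha]
    rw [abs_le]
    constructor <;> [linarith [h1.1, h2.2]; linarith [h1.2, h2.1]]
  calc ∫⁻ z, ∫⁻ s, ∫⁻ w, ENNReal.ofReal (Real.exp (((n : ℝ) - 1) / 2 *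
          (testLoss n loss ((z, s), w) - trainLoss n loss ((z, s), w)) ^ 2))
          ∂(κ (z, s)) ∂(Measure.pi fun _ : Fin n => coin) ∂PZt
      ≤ ∫⁻ _z, ENNReal.ofReal (Real.sqrt n) ∂PZt := by
        refine lintegral_mono fun z => ?_
        have hswap : ∫⁻ s, ∫⁻ w, ENNReal.ofReal (Real.exp (((n : ℝ) - 1) / 2 *
              (testLoss n loss ((z, s), w) - trainLoss n loss ((z, s), w)) ^ 2))
              ∂(M z) ∂(Measure.pi fun _ : Fin n => coin)
            = ∫⁻ w, ∫⁻ s, ENNReal.ofReal (Real.exp (((n : ℝ) - 1) / 2 *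
              (testLoss n loss ((z, s), w) - trainLoss n loss ((z, s), w)) ^ 2))
              ∂(Measure.pi fun _ : Fin n => coin) ∂(M z) := by
          refine lintegral_lintegral_swap ?_
          exact (mG.comp (((measurable_const.prodMk measurable_fst).prodMk
            measurable_snd))).aemeasurable
        have hκz : ∀ s : Fin n → Bool, κ (z, s) = M z := fun s => by rw [hκ, Kernel.comap_apply]
        simp_rw [hκz]
        rw [hswap]
        calc ∫⁻ w, ∫⁻ s, ENNReal.ofReal (Real.exp (((n : ℝ) - 1) / 2 *
              (testLoss n loss ((z, s), w) - trainLoss n loss ((z, s), w)) ^ 2))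
              ∂(Measure.pi fun _ : Fin n => coin) ∂(M z)
            ≤ ∫⁻ _w, ENNReal.ofReal (Real.sqrt n) ∂(M z) :=
              lintegral_mono fun w => hinner z w
          _ = ENNReal.ofReal (Real.sqrt n) := by simp
    _ = ENNReal.ofReal (Real.sqrt n) := by simp


/-- eq. (4): slow-rate single-draw bound. -/
theorem stmt18
    {Z W : Type*} [MeasurableSpace Z] [MeasurableSpace W]
    (n : ℕ) (hn : 0 < n)
    (PZ : Measure Z) [IsProbabilityMeasure PZ]
    (loss : W → Z → ℝ) (hlossmeas : Measurable (Function.uncurry loss))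
    (hloss : ∀ w z, loss w z ∈ Set.Icc (0:ℝ) 1)
    (K : Kernel ((Fin n × Bool → Z) × (Fin n → Bool)) W) [IsMarkovKernel K]
    (hK : ∀ zt s zt' s', (∀ i, zt (i, s i) = zt' (i, s' i)) → K (zt, s) = K (zt', s'))
    (PZt : Measure ((Fin n × Bool) → Z)) (hPZt : PZt = Measure.pi fun _ => PZ)
    (PS : Measure (Fin n → Bool)) (hPS : PS = Measure.pi fun _ => coin)
    (PWZS : Measure (((Fin n × Bool → Z) × (Fin n → Bool)) × W))
    (hPWZS : PWZS = (PZt.prod PS).bind fun p => (K p).map fun w => (p, w))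
    (M : Kernel (Fin n × Bool → Z) W) [IsMarkovKernel M]
    (hM : ∀ z, M z = PS.bind fun s => K (z, s))
    (MJ : Measure (((Fin n × Bool → Z) × (Fin n → Bool)) × W))
    (hMJ : MJ = (PZt.prod PS).bind fun p => (M p.1).map fun w => (p, w))
    (hn2 : 2 ≤ n)
    (hac1 : PWZS ≪ MJ) (hac2 : MJ ≪ PWZS)
    (δ : ℝ) (hδ0 : 0 < δ) (hδ1 : δ < 1) :
    ENNReal.ofReal (1 - δ) ≤ PWZS {x |
      testLoss n loss x ≤ trainLoss n loss x
        + Real.sqrt ((2 / (n - 1 : ℝ)) *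
            (Real.log ((PWZS.rnDeriv MJ x).toReal) + Real.log (Real.sqrt n / δ)))} := by
  classical
  have hn2' : (2:ℝ) ≤ n := by exact_mod_cast hn2
  have hn1 : (0:ℝ) < (n:ℝ) - 1 := by linarith
  have hsq : (0:ℝ) < Real.sqrt n := Real.sqrt_pos.2 (by linarith)
  subst hPZt hPS
  haveI hPW : IsProbabilityMeasure PWZS := by rw [hPWZS]; exact isProb_bind_J _ K
  haveI hMJp : IsProbabilityMeasure MJ := by
    rw [hMJ]; exact isProb_bind_J2 _ M
  have key : ∫⁻ x, ENNReal.ofReal (Real.exp (((n:ℝ)-1)/2 *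
      (testLoss n loss x - trainLoss n loss x)^2)) ∂MJ ≤ ENNReal.ofReal (Real.sqrt n) := by
    rw [hMJ]; exact expA n hn2 _ loss hlossmeas hloss M
  set G := fun x : ((Fin n × Bool → Z) × (Fin n → Bool)) × W =>
    Real.exp (((n:ℝ)-1)/2 * (testLoss n loss x - trainLoss n loss x)^2) with hG
  have mG0 : Measurable G :=
    (measurable_const.mul (((measurable_testLoss n loss hlossmeas).sub
      (measurable_trainLoss n loss hlossmeas)).pow_const 2)).exp
  set bad := {x : ((Fin n × Bool → Z) × (Fin n → Bool)) × W |
    trainLoss n loss x + Real.sqrt ((2 / (n - 1 : ℝ)) *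
      (Real.log ((PWZS.rnDeriv MJ x).toReal) + Real.log (Real.sqrt n / δ)))
    < testLoss n loss x} with hbad
  have m1 : Measurable fun x : ((Fin n × Bool → Z) × (Fin n → Bool)) × W =>
      Real.log ((PWZS.rnDeriv MJ x).toReal) :=
    Real.measurable_log.comp (Measure.measurable_rnDeriv _ _).ennreal_toReal
  have m2 : Measurable fun x : ((Fin n × Bool → Z) × (Fin n → Bool)) × W =>
      Real.sqrt ((2 / (n - 1 : ℝ)) *
        (Real.log ((PWZS.rnDeriv MJ x).toReal) + Real.log (Real.sqrt n / δ))) :=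
    Real.continuous_sqrt.measurable.comp ((m1.add measurable_const).const_mul _)
  have hmeasb : MeasurableSet bad := by
    rw [hbad]
    exact measurableSet_lt ((measurable_trainLoss n loss hlossmeas).add m2)
      (measurable_testLoss n loss hlossmeas)
  have hset : {x : ((Fin n × Bool → Z) × (Fin n → Bool)) × W |
      testLoss n loss x ≤ trainLoss n loss x
        + Real.sqrt ((2 / (n - 1 : ℝ)) *
            (Real.log ((PWZS.rnDeriv MJ x).toReal) + Real.log (Real.sqrt n / δ)))} = badᶜ := by
    ext x
    simp only [hbad, Set.mem_setOf_eq, Set.mem_compl_iff, not_lt]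
  have h_pos : ∀ᵐ x ∂PWZS, 0 < PWZS.rnDeriv MJ x := Measure.rnDeriv_pos hac1
  have h_fin : ∀ᵐ x ∂PWZS, PWZS.rnDeriv MJ x < ⊤ := hac1.ae_le (Measure.rnDeriv_lt_top PWZS MJ)
  have h_inv : (PWZS.rnDeriv MJ)⁻¹ =ᵐ[PWZS] MJ.rnDeriv PWZS := Measure.inv_rnDeriv hac1
  have hind : bad.indicator (fun _ => (1:ℝ≥0∞)) ≤ᵐ[PWZS]
      fun x => ENNReal.ofReal (δ / Real.sqrt n) * (MJ.rnDeriv PWZS x * ENNReal.ofReal (G x)) := by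
    filter_upwards [h_pos, h_fin, h_inv] with x hx1 hx2 hx3
    rw [Pi.inv_apply] at hx3
    by_cases hxb : x ∈ bad
    · rw [Set.indicator_of_mem hxb]
      have hR : 0 < (PWZS.rnDeriv MJ x).toReal := ENNReal.toReal_pos hx1.ne' hx2.ne
      set R := (PWZS.rnDeriv MJ x).toReal with hRdef
      have hlt : Real.sqrt ((2 / (n - 1 : ℝ)) * (Real.log R + Real.log (Real.sqrt n / δ)))
          < testLoss n loss x - trainLoss n loss x := by
        have h := hxb; rw [hbad] at h; simp only [Set.mem_setOf_eq] at h; linarith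
      set Δx := testLoss n loss x - trainLoss n loss x with hΔx
      have hΔpos : 0 < Δx := lt_of_le_of_lt (Real.sqrt_nonneg _) hlt
      have hc0 : (0:ℝ) < ((n:ℝ)-1)/2 := by linarith
      have harg : Real.log R + Real.log (Real.sqrt n / δ) < ((n:ℝ)-1)/2 * Δx ^ 2 := by
        set A := (2 / (n - 1 : ℝ)) * (Real.log R + Real.log (Real.sqrt n / δ)) with hA
        have hAeq : Real.log R + Real.log (Real.sqrt n / δ) = ((n:ℝ)-1)/2 * A := by
          rw [hA]; field_simp
        rw [hAeq]
        rcases le_or_gt A 0 with h | h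
        · have h2 : ((n:ℝ)-1)/2 * A ≤ 0 := mul_nonpos_of_nonneg_of_nonpos hc0.le h
          have h3 : 0 < ((n:ℝ)-1)/2 * Δx^2 := by positivity
          linarith
        · have h4 : A < Δx^2 := by
            nlinarith [Real.sq_sqrt h.le, hlt, Real.sqrt_nonneg A]
          exact mul_lt_mul_of_pos_left h4 hc0
      have hGlt : R * (Real.sqrt n / δ) < G x := by
        have h1 : R * (Real.sqrt n / δ) = Real.exp (Real.log R + Real.log (Real.sqrt n / δ)) := by
          rw [Real.exp_add, Real.exp_log hR, Real.exp_log (by positivity)]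
        rw [h1, hG]
        exact Real.exp_lt_exp.2 harg
      have hR2 : R ≤ δ / Real.sqrt n * G x := by
        rw [div_mul_eq_mul_div, le_div_iff₀ hsq]
        have h5 : R * (Real.sqrt n / δ) * δ < G x * δ := mul_lt_mul_of_pos_right hGlt hδ0
        have h6 : R * (Real.sqrt n / δ) * δ = R * Real.sqrt n := by field_simp
        nlinarith [h5, h6]
      calc (1:ℝ≥0∞) = PWZS.rnDeriv MJ x * (PWZS.rnDeriv MJ x)⁻¹ :=
            (ENNReal.mul_inv_cancel hx1.ne' hx2.ne).symm
        _ ≤ (ENNReal.ofReal (δ / Real.sqrt n) * ENNReal.ofReal (G x)) *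
              (PWZS.rnDeriv MJ x)⁻¹ := by
            refine mul_le_mul_left ?_ _
            rw [← ENNReal.ofReal_mul (by positivity), ← ENNReal.ofReal_toReal hx2.ne]
            exact ENNReal.ofReal_le_ofReal hR2
        _ = ENNReal.ofReal (δ / Real.sqrt n) * (MJ.rnDeriv PWZS x * ENNReal.ofReal (G x)) := by
            rw [hx3]; ring
    · rw [Set.indicator_of_notMem hxb]; exact zero_le
  have hb : PWZS bad ≤ ENNReal.ofReal δ := by
    calc PWZS bad = ∫⁻ x, bad.indicator (fun _ => (1:ℝ≥0∞)) x ∂PWZS :=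
          (lintegral_indicator_one hmeasb).symm
      _ ≤ ∫⁻ x, ENNReal.ofReal (δ / Real.sqrt n) *
            (MJ.rnDeriv PWZS x * ENNReal.ofReal (G x)) ∂PWZS := lintegral_mono_ae hind
      _ = ENNReal.ofReal (δ / Real.sqrt n) *
            ∫⁻ x, MJ.rnDeriv PWZS x * ENNReal.ofReal (G x) ∂PWZS :=
          lintegral_const_mul _ ((Measure.measurable_rnDeriv _ _).mul mG0.ennreal_ofReal)
      _ = ENNReal.ofReal (δ / Real.sqrt n) * ∫⁻ x, ENNReal.ofReal (G x) ∂MJ := by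
          rw [MeasureTheory.lintegral_rnDeriv_mul hac2 mG0.ennreal_ofReal.aemeasurable]
      _ ≤ ENNReal.ofReal (δ / Real.sqrt n) * ENNReal.ofReal (Real.sqrt n) :=
          mul_le_mul_right key _
      _ = ENNReal.ofReal δ := by
          rw [← ENNReal.ofReal_mul (by positivity), div_mul_cancel₀ _ hsq.ne']
  rw [hset, prob_compl_eq_one_sub hmeasb]
  calc ENNReal.ofReal (1 - δ) = 1 - ENNReal.ofReal δ := by
        rw [ENNReal.ofReal_sub _ hδ0.le, ENNReal.ofReal_one]
    _ ≤ 1 - PWZS bad := tsub_le_tsub_left hb 1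
end
end

section
/- (Samplewise intermediate bound, eq. (24)) Let λ, γ > 0 satisfy λ(1−γ) + (e^λ − 1 − λ)(1 + γ²) ≤ 0. Let a, b ∈ [0,1], let S be a Bernoulli(1/2) random variable with distribution P_S, and let X(S) = a if S = 0 and X(S) = b if S = 1, with X̄(S) = b if S = 0 and X̄(S) = a if S = 1. Then for any probability measure P̃ on {0,1} that is mutually absolutely continuous with P_S: E_{P̃}[X̄(S)] ≤ γ·E_{P̃}[X(S)] + KL(P̃ ‖ P_S)/λ, where KL denotes relative entropy. -/
open MeasureTheory ProbabilityTheory Real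

noncomputable section

lemma exp_tail (x : ℝ) :
    Real.exp x = 1 + x + ∑' n : ℕ, x ^ (n + 2) / Nat.factorial (n + 2) := by
  have hs : Summable (fun n : ℕ => x ^ n / Nat.factorial n) := Real.summable_pow_div_factorial x
  have hs1 : Summable (fun n : ℕ => x ^ (n + 1) / Nat.factorial (n + 1)) :=
    (summable_nat_add_iff 1).2 hs
  rw [Real.exp_eq_exp_ℝ, NormedSpace.exp_eq_tsum_div]
  show (∑' n : ℕ, x ^ n / Nat.factorial n) = _
  rw [Summable.tsum_eq_zero_add hs, Summable.tsum_eq_zero_add hs1]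
  simp [Nat.factorial]
  ring

lemma tail_nonneg_ge (lam : ℝ) (hlam : 0 ≤ lam) :
    lam ^ 2 / 2 ≤ Real.exp lam - 1 - lam := by
  have h := exp_tail lam
  have hs : Summable (fun n : ℕ => lam ^ (n + 2) / Nat.factorial (n + 2)) :=
    (summable_nat_add_iff 2).2 (Real.summable_pow_div_factorial lam)
  have h0 : lam ^ (0 + 2) / Nat.factorial (0 + 2) ≤ ∑' n : ℕ, lam ^ (n + 2) / Nat.factorial (n + 2) :=
    Summable.le_tsum hs 0 (fun n _ => by positivity)
  have heq : lam ^ (0 + 2) / ((Nat.factorial (0 + 2) : ℕ) : ℝ) = lam ^ 2 / 2 := by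
    norm_num [Nat.factorial]
  rw [heq] at h0
  linarith

lemma exp_quad_neg {x : ℝ} (hx : x ≤ 0) : Real.exp x ≤ 1 + x + x ^ 2 / 2 := by
  have hd : ∀ y : ℝ, HasDerivAt (fun y : ℝ => 1 + y + y ^ 2 / 2 - Real.exp y)
      (1 + y - Real.exp y) y := by
    intro y
    have h1 : HasDerivAt (fun y : ℝ => 1 + y + y ^ 2 / 2 - Real.exp y)
        (0 + 1 + (2 * y ^ 1) / 2 - Real.exp y) y :=
      (((hasDerivAt_const y (1:ℝ)).add (hasDerivAt_id' (x := y))).add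
        ((hasDerivAt_pow 2 y).div_const 2)).sub (Real.hasDerivAt_exp y)
    convert h1 using 1; ring
  have hanti : AntitoneOn (fun y : ℝ => 1 + y + y ^ 2 / 2 - Real.exp y) (Set.Iic 0) := by
    apply antitoneOn_of_deriv_nonpos (convex_Iic (0:ℝ))
    · exact (Continuous.continuousOn (by continuity))
    · intro y hy
      exact (hd y).differentiableAt.differentiableWithinAt
    · intro y hy
      rw [(hd y).deriv]
      have := Real.add_one_le_exp y
      linarith
  have h := hanti (Set.mem_Iic.2 hx) (Set.mem_Iic.2 le_rfl) hx
  simp at h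
  linarith

set_option maxHeartbeats 1000000 in
lemma key (lam x : ℝ) (hlam : 0 < lam) (hx : x ≤ lam) :
    Real.exp x ≤ 1 + x + x ^ 2 * ((Real.exp lam - 1 - lam) / lam ^ 2) := by
  rcases le_or_gt x 0 with hx0 | hx0
  · have h1 := exp_quad_neg hx0
    have h2 := tail_nonneg_ge lam hlam.le
    have h3 : (1:ℝ)/2 ≤ (Real.exp lam - 1 - lam) / lam ^ 2 := by
      rw [le_div_iff₀ (by positivity : (0:ℝ) < lam ^ 2)]
      nlinarith
    have h4 : x ^ 2 * (1/2) ≤ x ^ 2 * ((Real.exp lam - 1 - lam) / lam ^ 2) :=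
      mul_le_mul_of_nonneg_left h3 (sq_nonneg x)
    linarith
  · have hs : Summable (fun n : ℕ => x ^ (n + 2) / Nat.factorial (n + 2)) :=
      (summable_nat_add_iff 2).2 (Real.summable_pow_div_factorial x)
    have hsl : Summable (fun n : ℕ => lam ^ (n + 2) / Nat.factorial (n + 2)) :=
      (summable_nat_add_iff (f := fun n : ℕ => lam ^ n / (Nat.factorial n : ℝ)) 2).2
        (Real.summable_pow_div_factorial lam)
    have hterm : ∀ n : ℕ, x ^ (n + 2) / Nat.factorial (n + 2)
        ≤ (x ^ 2 / lam ^ 2) * (lam ^ (n + 2) / Nat.factorial (n + 2)) := by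
      intro n
      have hxn : x ^ n ≤ lam ^ n := pow_le_pow_left₀ hx0.le hx n
      have hnum : x ^ (n + 2) ≤ x ^ 2 * lam ^ n := by
        have : x ^ (n + 2) = x ^ 2 * x ^ n := by ring
        rw [this]
        exact mul_le_mul_of_nonneg_left hxn (by positivity)
      have hrhs : (x ^ 2 / lam ^ 2) * (lam ^ (n + 2) / Nat.factorial (n + 2))
          = (x ^ 2 * lam ^ n) / Nat.factorial (n + 2) := by
        have hl : lam ^ (n + 2) = lam ^ 2 * lam ^ n := by ring
        rw [hl]
        field_simp
      rw [hrhs]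
      have hfac : (0:ℝ) < ((Nat.factorial (n + 2) : ℕ) : ℝ) := by positivity
      exact div_le_div_of_nonneg_right hnum hfac.le
    have hsum : ∑' n : ℕ, x ^ (n + 2) / Nat.factorial (n + 2)
        ≤ ∑' n : ℕ, (x ^ 2 / lam ^ 2) * (lam ^ (n + 2) / Nat.factorial (n + 2)) :=
      Summable.tsum_le_tsum hterm hs (hsl.mul_left _)
    rw [tsum_mul_left] at hsum
    have hx' := exp_tail x
    have hl' := exp_tail lam
    have hT : ∑' n : ℕ, lam ^ (n + 2) / Nat.factorial (n + 2) = Real.exp lam - 1 - lam := by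
      linarith
    rw [hT] at hsum
    have hring : (x ^ 2 / lam ^ 2) * (Real.exp lam - 1 - lam)
        = x ^ 2 * ((Real.exp lam - 1 - lam) / lam ^ 2) := by ring
    rw [hx']
    linarith

lemma mgf_le (lam gam : ℝ) (hlam : 0 < lam) (hgam : 0 < gam)
    (hcond : lam * (1 - gam) + (Real.exp lam - 1 - lam) * (1 + gam ^ 2) ≤ 0)
    (a b : ℝ) (ha : a ∈ Set.Icc (0:ℝ) 1) (hb : b ∈ Set.Icc (0:ℝ) 1) :
    Real.exp (lam * (a - gam * b)) + Real.exp (lam * (b - gam * a)) ≤ 2 := by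
  obtain ⟨ha0, ha1⟩ := ha
  obtain ⟨hb0, hb1⟩ := hb
  set c : ℝ := (Real.exp lam - 1 - lam) / lam ^ 2 with hc
  have hE : 0 ≤ Real.exp lam - 1 - lam := by
    have := Real.add_one_le_exp lam; linarith
  have hc0 : 0 ≤ c := by positivity
  have h1 : Real.exp (lam * (a - gam * b))
      ≤ 1 + lam * (a - gam * b) + (lam * (a - gam * b)) ^ 2 * c := by
    apply key lam _ hlam
    have h : a - gam * b ≤ 1 := by nlinarith
    calc lam * (a - gam * b) ≤ lam * 1 := mul_le_mul_of_nonneg_left h hlam.le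
      _ = lam := mul_one lam
  have h2 : Real.exp (lam * (b - gam * a))
      ≤ 1 + lam * (b - gam * a) + (lam * (b - gam * a)) ^ 2 * c := by
    apply key lam _ hlam
    have h : b - gam * a ≤ 1 := by nlinarith
    calc lam * (b - gam * a) ≤ lam * 1 := mul_le_mul_of_nonneg_left h hlam.le
      _ = lam := mul_one lam
  have hsq : (lam * (a - gam * b)) ^ 2 + (lam * (b - gam * a)) ^ 2
      ≤ lam ^ 2 * ((1 + gam ^ 2) * (a + b)) := by
    have expand : (lam * (a - gam * b)) ^ 2 + (lam * (b - gam * a)) ^ 2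
        = lam ^ 2 * ((1 + gam ^ 2) * (a ^ 2 + b ^ 2) - 4 * gam * (a * b)) := by ring
    rw [expand]
    have haa : a ^ 2 ≤ a := by nlinarith
    have hbb : b ^ 2 ≤ b := by nlinarith
    have hab : 0 ≤ gam * (a * b) := by positivity
    have hl2 : (0:ℝ) < lam ^ 2 := by positivity
    have : (1 + gam ^ 2) * (a ^ 2 + b ^ 2) - 4 * gam * (a * b) ≤ (1 + gam ^ 2) * (a + b) := by
      nlinarith
    exact mul_le_mul_of_nonneg_left this hl2.le
  have hlin : lam * (a - gam * b) + lam * (b - gam * a) = lam * (1 - gam) * (a + b) := by ring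
  have hcE : lam ^ 2 * c = Real.exp lam - 1 - lam := by
    rw [hc]; field_simp
  -- combine
  have hmain : lam * (1 - gam) * (a + b) + (Real.exp lam - 1 - lam) * ((1 + gam ^ 2) * (a + b)) ≤ 0 := by
    have hab0 : 0 ≤ a + b := by linarith
    nlinarith [mul_le_mul_of_nonneg_right hcond hab0]
  have hsqc : ((lam * (a - gam * b)) ^ 2 + (lam * (b - gam * a)) ^ 2) * c
      ≤ (Real.exp lam - 1 - lam) * ((1 + gam ^ 2) * (a + b)) := by
    calc ((lam * (a - gam * b)) ^ 2 + (lam * (b - gam * a)) ^ 2) * c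
        ≤ lam ^ 2 * ((1 + gam ^ 2) * (a + b)) * c := mul_le_mul_of_nonneg_right hsq hc0
      _ = (lam ^ 2 * c) * ((1 + gam ^ 2) * (a + b)) := by ring
      _ = (Real.exp lam - 1 - lam) * ((1 + gam ^ 2) * (a + b)) := by rw [hcE]
  nlinarith [h1, h2, hsqc, hmain, hlin]

lemma log_jensen2 {p q X Y : ℝ} (hp : 0 ≤ p) (hq : 0 ≤ q) (hpq : p + q = 1)
    (hX : 0 < X) (hY : 0 < Y) :
    p * Real.log X + q * Real.log Y ≤ Real.log (p * X + q * Y) := by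
  have h := strictConcaveOn_log_Ioi.concaveOn.2 (Set.mem_Ioi.2 hX) (Set.mem_Ioi.2 hY) hp hq hpq
  simpa [smul_eq_mul] using h


lemma coin_singleton (x : Bool) : coin {x} = 2⁻¹ := by
  rw [coin, PMF.toMeasure_apply_singleton _ _ (measurableSet_singleton x)]
  simp [PMF.uniformOfFintype_apply]

lemma pt_eq_withDensity (Pt : Measure Bool) [IsProbabilityMeasure Pt] :
    Pt = coin.withDensity (fun x => 2 * Pt {x}) := by
  apply MeasureTheory.Measure.ext_iff_singleton.mpr
  intro x
  rw [withDensity_apply _ (measurableSet_singleton x), lintegral_singleton, coin_singleton]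
  rw [mul_comm (2 * Pt {x}) 2⁻¹, ← mul_assoc]
  rw [ENNReal.inv_mul_cancel (by norm_num) (by norm_num), one_mul]

lemma rnDeriv_pt (Pt : Measure Bool) [IsProbabilityMeasure Pt] (h1 : Pt ≪ coin) :
    ∀ᵐ x ∂Pt, Pt.rnDeriv coin x = 2 * Pt {x} := by
  have h := Measure.rnDeriv_withDensity coin
    (f := fun x : Bool => 2 * Pt {x}) (measurable_of_countable _)
  rw [← pt_eq_withDensity Pt] at h
  exact h1.ae_le h

set_option maxHeartbeats 1000000 in
/-- eq. (24): samplewise intermediate change-of-measure bound. -/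
theorem stmt19 (lam gam : ℝ) (hlam : 0 < lam) (hgam : 0 < gam)
    (hcond : lam * (1 - gam) + (Real.exp lam - 1 - lam) * (1 + gam ^ 2) ≤ 0)
    (a b : ℝ) (ha : a ∈ Set.Icc (0:ℝ) 1) (hb : b ∈ Set.Icc (0:ℝ) 1)
    (Pt : Measure Bool) [IsProbabilityMeasure Pt]
    (h1 : Pt ≪ coin) (h2 : coin ≪ Pt) :
    ∫ s, (if s then a else b) ∂Pt
      ≤ gam * ∫ s, (if s then b else a) ∂Pt + klDiv' Pt coin / lam := by
  set p : ℝ := (Pt {true}).toReal with hp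
  set q : ℝ := (Pt {false}).toReal with hq
  have hne : ∀ x : Bool, Pt {x} ≠ ⊤ := fun x => measure_ne_top Pt _
  have hsum1 : Pt {false} + Pt {true} = 1 := by
    rw [← measure_union (by simp) (measurableSet_singleton true)]
    have : ({false} ∪ {true} : Set Bool) = Set.univ := by
      ext x; cases x <;> simp
    rw [this, measure_univ]
  have hpq : q + p = 1 := by
    rw [hp, hq, ← ENNReal.toReal_add (hne false) (hne true), hsum1, ENNReal.toReal_one]
  have hppos : 0 < p := by
    rw [hp, ENNReal.toReal_pos_iff]
    refine ⟨?_, (hne true).lt_top⟩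
    rw [pos_iff_ne_zero]
    intro h0
    have := h2 h0
    rw [coin_singleton] at this
    norm_num at this
  have hqpos : 0 < q := by
    rw [hq, ENNReal.toReal_pos_iff]
    refine ⟨?_, (hne false).lt_top⟩
    rw [pos_iff_ne_zero]
    intro h0
    have := h2 h0
    rw [coin_singleton] at this
    norm_num at this
  -- integrals
  have hint1 : ∫ s, (if s then a else b) ∂Pt = q * b + p * a := by
    rw [integral_fintype (Integrable.of_finite)]
    simp [Fintype.sum_bool, hp, hq, mul_comm, measureReal_def]
    ring
  have hint2 : ∫ s, (if s then b else a) ∂Pt = q * a + p * b := by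
    rw [integral_fintype (Integrable.of_finite)]
    simp [Fintype.sum_bool, hp, hq, mul_comm, measureReal_def]
    ring
  -- KL divergence
  have hKL : klDiv' Pt coin = q * Real.log (2 * q) + p * Real.log (2 * p) := by
    rw [klDiv']
    have hae := rnDeriv_pt Pt h1
    have : ∫ x, Real.log ((Pt.rnDeriv coin x).toReal) ∂Pt
        = ∫ x, Real.log ((2 * Pt {x}).toReal) ∂Pt := by
      apply integral_congr_ae
      filter_upwards [hae] with x hx
      rw [hx]
    rw [this, integral_fintype (Integrable.of_finite)]
    have ht : ∀ x : Bool, ((2 : ENNReal) * Pt {x}).toReal = 2 * (Pt {x}).toReal := by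
      intro x
      rw [ENNReal.toReal_mul]
      norm_num
    simp [Fintype.sum_bool, ht, hp, hq, measureReal_def]
    ring
  rw [hint1, hint2, hKL]
  -- main analytic inequality
  set u : ℝ := a - gam * b with hu
  set v : ℝ := b - gam * a with hv
  have hmgf := mgf_le lam gam hlam hgam hcond a b ha hb
  have h2p : (0:ℝ) < 2 * p := by linarith
  have h2q : (0:ℝ) < 2 * q := by linarith
  have hXpos : 0 < Real.exp (lam * u) / (2 * p) := by positivity
  have hYpos : 0 < Real.exp (lam * v) / (2 * q) := by positivity
  have hjen := log_jensen2 hppos.le hqpos.le (by linarith : p + q = 1) hXpos hYpos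
  have hlogX : Real.log (Real.exp (lam * u) / (2 * p)) = lam * u - Real.log (2 * p) := by
    rw [Real.log_div (Real.exp_ne_zero _) (ne_of_gt h2p), Real.log_exp]
  have hlogY : Real.log (Real.exp (lam * v) / (2 * q)) = lam * v - Real.log (2 * q) := by
    rw [Real.log_div (Real.exp_ne_zero _) (ne_of_gt h2q), Real.log_exp]
  have hcomb : p * (Real.exp (lam * u) / (2 * p)) + q * (Real.exp (lam * v) / (2 * q))
      = (Real.exp (lam * u) + Real.exp (lam * v)) / 2 := by
    field_simp
  have harg : (Real.exp (lam * u) + Real.exp (lam * v)) / 2 ≤ 1 := by linarith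
  have hlog1 : Real.log ((Real.exp (lam * u) + Real.exp (lam * v)) / 2) ≤ 0 := by
    have := Real.log_le_log (by positivity) harg
    simpa using this
  rw [hlogX, hlogY, hcomb] at hjen
  -- hjen : p*(lam*u - log(2p)) + q*(lam*v - log(2q)) ≤ log ((e+e)/2) ≤ 0
  have hfinal : lam * ((q * b + p * a) - gam * (q * a + p * b))
      ≤ q * Real.log (2 * q) + p * Real.log (2 * p) := by
    have hexp : lam * ((q * b + p * a) - gam * (q * a + p * b)) = p * (lam * u) + q * (lam * v) := by
      rw [hu, hv]; ring
    rw [hexp]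
    have expand : p * (lam * u - Real.log (2 * p)) + q * (lam * v - Real.log (2 * q))
        = p * (lam * u) + q * (lam * v) - (p * Real.log (2 * p) + q * Real.log (2 * q)) := by
      ring
    rw [expand] at hjen
    linarith
  have hdiv : (q * b + p * a) - gam * (q * a + p * b)
      ≤ (q * Real.log (2 * q) + p * Real.log (2 * p)) / lam := by
    rw [le_div_iff₀ hlam]
    linear_combination hfinal
  linarith
end
end
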